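/- arXiv:1303.0702 — 2 statements merged into one kernel-verified Lean document; each statement's English description precedes it below -/
import Mathlib

section
/- Let λ ∈ ℂ*, a ∈ ℂ, and let W be a nontrivial simple 𝔚-module in O_𝔚. Then the subspace L'(W, λ, a, 1) = ⊕_{n ∈ ℤ} ((d_{−1} − a − n)W) ⊗ t^n of L(W, λ, a, 1) is a Virasoro submodule, it is isomorphic to L(W, λ, a, 0), and the quotient satisfies L(W, λ, a, 1)/L'(W, λ, a, 1) ≅ N((Soc_𝔟 W)_(1), a). -/
/-!
Let `r` be the least index such that some nonzero vector of `W` is killed by all `d_i`, `i > r`,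
and let `V` be the space of such vectors. A nonzero eigenvector of `d_{-1}` would be killed by `𝔟`
and then span a trivial submodule, so every `d_{-1} - c` is injective; a nonzero vector `w` killed
by `𝔟` cannot exist either, since the `d_{-1}^{m+1} w` span a proper submodule. Hence `d_r` is
injective on `V`, and as `d_{r+m} d_{-1}^m` is a nonzero multiple of `d_r` on `V`, the map
`ℂ[d_{-1}] ⊗ V → W` is bijective and every nonzero `𝔟`-submodule meets `V`. So `V = Soc_𝔟 W`
and `W / (d_{-1} - c) W ≅ Soc_𝔟 W` through the evaluation `d_{-1} ↦ c`.

The relation `[d/dt, e^{kt} d/dt] = k e^{kt} d/dt` gives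
`(λ^k e^{kt} d/dt - d/dt + c + k) (d/dt - c) = (d/dt - c - k) (λ^k e^{kt} d/dt - d/dt + c)`,
so `⊕_n (d_{-1} - a - n)` is an injective homomorphism `L(W, λ, a, 0) → L(W, λ, a, 1)` with
image `L'`, while the evaluations at `a + n`, twisted by `λ^{-n}`, induce
`L(W, λ, a, 1) / L' ≅ N((Soc_𝔟 W)_(1), a)`.
-/

/-- A representation of the Witt algebra `𝔚 = span{d_i : i ≥ -1}`, encoded by the family of
operators `d i` (only the indices `i ≥ -1` are relevant) satisfying
`[d_m, d_n] = (n - m) d_{m+n}`. -/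
structure WittRep (W : Type*) [AddCommGroup W] [Module ℂ W] where
  d : ℤ → W →ₗ[ℂ] W
  comm : ∀ m n : ℤ, -1 ≤ m → -1 ≤ n →
    d m ∘ₗ d n - d n ∘ₗ d m = (((n - m : ℤ) : ℂ)) • d (m + n)

namespace WittRep

variable {W : Type*} [AddCommGroup W] [Module ℂ W]

/-- Condition A : the module lies in the category `O_𝔚`. -/
def InO (ρ : WittRep W) : Prop :=
  ∀ v : W, ∃ n : ℕ, ∀ i : ℤ, (n : ℤ) ≤ i → ρ.d i v = 0

/-- The module is trivial: the Lie algebra acts by zero. -/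
def IsTrivial (ρ : WittRep W) : Prop := ∀ i : ℤ, -1 ≤ i → ρ.d i = 0

/-- A `𝔚`-submodule. -/
def Invariant (ρ : WittRep W) (U : Submodule ℂ W) : Prop :=
  ∀ i : ℤ, -1 ≤ i → ∀ u ∈ U, ρ.d i u ∈ U

/-- Simplicity of a `𝔚`-module. -/
def IsSimple (ρ : WittRep W) : Prop :=
  (∃ v : W, v ≠ 0) ∧ ∀ U : Submodule ℂ W, ρ.Invariant U → U = ⊥ ∨ U = ⊤

/-- A `𝔟`-submodule (`𝔟 = span{d_i : i ≥ 0}`). -/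
def BInvariant (ρ : WittRep W) (U : Submodule ℂ W) : Prop :=
  ∀ i : ℤ, 0 ≤ i → ∀ u ∈ U, ρ.d i u ∈ U

/-- The socle `Soc_𝔟(W)`: the sum of the minimal nonzero `𝔟`-submodules. -/
def Soc (ρ : WittRep W) : Submodule ℂ W :=
  sSup {U | ρ.BInvariant U ∧ U ≠ ⊥ ∧
    ∀ U' : Submodule ℂ W, ρ.BInvariant U' → U' ≠ ⊥ → U' ≤ U → U' = U}

/-- `w₀` is a highest weight vector of weight `b'`. -/
def IsHW (ρ : WittRep W) (w₀ : W) (b' : ℂ) : Prop :=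
  w₀ ≠ 0 ∧ ρ.d 0 w₀ = b' • w₀ ∧ ∀ i : ℤ, 1 ≤ i → ρ.d i w₀ = 0

/-- `w₀` generates the `𝔚`-module. -/
def Generates (ρ : WittRep W) (w₀ : W) : Prop :=
  ∀ U : Submodule ℂ W, ρ.Invariant U → w₀ ∈ U → U = ⊤

/-- The operator `e^{kt} d/dt = Σ_{i ≥ 0} (k^i/i!) d_{i-1}` (a finite sum on each vector of a
module in `O_𝔚`). -/
noncomputable def E (ρ : WittRep W) (k : ℤ) (w : W) : W :=
  ∑ᶠ i : ℕ, (((k : ℂ) ^ i) / (Nat.factorial i : ℂ)) • ρ.d ((i : ℤ) - 1) w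

/-- The action of `d_k` on `L(W, λ, a, b) = W ⊗ ℂ[t, t⁻¹]`, realized on `ℤ →₀ W`
(`w ⊗ t^j ↦ Finsupp.single j w`):
`d_k · (w ⊗ t^j) = ((λ^k e^{kt} − 1) d/dt + a + kb + j) w ⊗ t^{k+j}`. -/
noncomputable def Lact (ρ : WittRep W) (lam a b : ℂ) (k : ℤ) (f : ℤ →₀ W) : ℤ →₀ W :=
  f.sum fun j w => Finsupp.single (k + j)
    (lam ^ k • ρ.E k w - ρ.d (-1) w + (a + (k : ℂ) * b + (j : ℂ)) • w)

/-- The PBW map `ℕ →₀ ℂ → W`, `(k, c) ↦ c • d_{-1}^k w₀`. -/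
noncomputable def pbwMap (ρ : WittRep W) (w₀ : W) : (ℕ →₀ ℂ) →ₗ[ℂ] W :=
  Finsupp.lsum ℂ fun k : ℕ => ((ρ.d (-1)) ^ k) ∘ₗ LinearMap.toSpanSingleton ℂ W w₀

/-- `W` is the Verma `𝔚`-module with highest weight vector `w₀` of highest weight `b'`. -/
def IsVerma (ρ : WittRep W) (w₀ : W) (b' : ℂ) : Prop :=
  ρ.d 0 w₀ = b' • w₀ ∧ (∀ i : ℤ, 1 ≤ i → ρ.d i w₀ = 0) ∧
    Function.Bijective (ρ.pbwMap w₀)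

/-- `W^{(n)} = Σ_{i=0}^n d_{-1}^i (Soc_𝔟 W)`. -/
noncomputable def Wn (ρ : WittRep W) (n : ℕ) : Submodule ℂ W :=
  ⨆ i : Fin (n + 1), Submodule.map ((ρ.d (-1)) ^ (i : ℕ)) ρ.Soc

/-- `L₀(a, b') = span{d₁^i · (w₀ ⊗ t^{2j})} ⊆ L(W, -1, a, b' + 1)`. -/
noncomputable def Lzero (ρ : WittRep W) (a b' : ℂ) (w₀ : W) : Submodule ℂ (ℤ →₀ W) :=
  Submodule.span ℂ
    {g | ∃ (i : ℕ) (j : ℤ), g = (ρ.Lact (-1) a (b' + 1) 1)^[i] (Finsupp.single (2 * j) w₀)}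

/-- `L₁(a, b') = span{d₁^i · (w₀ ⊗ t^{2j+1})} ⊆ L(W, -1, a, b' + 1)`. -/
noncomputable def Lone (ρ : WittRep W) (a b' : ℂ) (w₀ : W) : Submodule ℂ (ℤ →₀ W) :=
  Submodule.span ℂ
    {g | ∃ (i : ℕ) (j : ℤ), g = (ρ.Lact (-1) a (b' + 1) 1)^[i] (Finsupp.single (2 * j + 1) w₀)}

end WittRep

/-- A representation of the Lie algebra `𝔟 = span{d_i : i ≥ 0}`. -/
structure BRep (B : Type*) [AddCommGroup B] [Module ℂ B] where
  d : ℕ → B →ₗ[ℂ] B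
  comm : ∀ m n : ℕ, d m ∘ₗ d n - d n ∘ₗ d m = (((n : ℂ) - (m : ℂ))) • d (m + n)

namespace BRep

variable {B : Type*} [AddCommGroup B] [Module ℂ B]

/-- Condition A : the module lies in the category `O_𝔟`. -/
def InO (ρ : BRep B) : Prop := ∀ v : B, ∃ n : ℕ, ∀ i : ℕ, n ≤ i → ρ.d i v = 0

def IsTrivial (ρ : BRep B) : Prop := ∀ i : ℕ, ρ.d i = 0

def IsSimple (ρ : BRep B) : Prop :=
  (∃ v : B, v ≠ 0) ∧
    ∀ U : Submodule ℂ B, (∀ i : ℕ, ∀ u ∈ U, ρ.d i u ∈ U) → U = ⊥ ∨ U = ⊤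

/-- The set of `r ∈ ℤ≥0` such that `d_{r+i} v = 0` for all `i ≥ 1`;
`ord_𝔟(v)` is its least element. -/
def ordSet (ρ : BRep B) (v : B) : Set ℕ := {r : ℕ | ∀ i : ℕ, r + 1 ≤ i → ρ.d i v = 0}

/-- The action of `d_m` on the Virasoro module `N(B_(c), a) = B ⊗ ℂ[t, t⁻¹]`, realized on
`ℤ →₀ B`:  `d_m · (w ⊗ t^j) = (Σ_{i≥1} (m^i/i!) d_{i-1} + mc + a + j) w ⊗ t^{m+j}`
(`c` is the twist of the `d₀`-action; `c = 0` gives `N(B, a)`). -/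
noncomputable def Nact (ρ : BRep B) (a c : ℂ) (m : ℤ) (f : ℤ →₀ B) : ℤ →₀ B :=
  f.sum fun j w => Finsupp.single (m + j)
    ((∑ᶠ i : ℕ, (((m : ℂ) ^ (i + 1)) / (Nat.factorial (i + 1) : ℂ)) • ρ.d i w) +
      ((m : ℂ) * c + a + (j : ℂ)) • w)

end BRep

/-- For a family `U : ℤ → Submodule ℂ W`, the subspace `⊕_j U j ⊗ t^j` of `W ⊗ ℂ[t,t⁻¹]`. -/
def gradedSub {W : Type*} [AddCommGroup W] [Module ℂ W] (U : ℤ → Submodule ℂ W) :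
    Submodule ℂ (ℤ →₀ W) where
  carrier := {f | ∀ j, f j ∈ U j}
  add_mem' := fun hf hg j => by
    simpa only [Finsupp.add_apply] using (U j).add_mem (hf j) (hg j)
  zero_mem' := fun j => by simp
  smul_mem' := fun c f hf j => by
    simpa only [Finsupp.smul_apply] using (U j).smul_mem c (hf j)

/-- A submodule invariant under a (ℤ-indexed) family of operators. -/
def ActInvariant {V : Type*} [AddCommGroup V] [Module ℂ V] (act : ℤ → V → V)
    (M : Submodule ℂ V) : Prop :=
  ∀ k : ℤ, ∀ u ∈ M, act k u ∈ M

/-- Simplicity of the module given by a family of operators (the central element acts by zero). -/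
def ActSimple {V : Type*} [AddCommGroup V] [Module ℂ V] (act : ℤ → V → V) : Prop :=
  (∃ v : V, v ≠ 0) ∧ ∀ M : Submodule ℂ V, ActInvariant act M → M = ⊥ ∨ M = ⊤

/-- A representation of the Virasoro algebra. -/
structure VirasoroRep (V : Type*) [AddCommGroup V] [Module ℂ V] where
  d : ℤ → V →ₗ[ℂ] V
  z : V →ₗ[ℂ] V
  comm : ∀ m n : ℤ, d m ∘ₗ d n - d n ∘ₗ d m =
    (((n - m : ℤ) : ℂ)) • d (m + n) +
      (if m + n = 0 then (((n : ℂ) ^ 3 - (n : ℂ)) / 12) else 0) • z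
  comm_z : ∀ m : ℤ, d m ∘ₗ z = z ∘ₗ d m

/-- `L'(W, λ, a, 1) = ⊕_{n ∈ ℤ} ((d_{-1} - a - n) W) ⊗ t^n`. -/
noncomputable def WittRep.Lprime {W : Type*} [AddCommGroup W] [Module ℂ W]
    (ρ : WittRep W) (a : ℂ) : Submodule ℂ (ℤ →₀ W) :=
  gradedSub fun n : ℤ =>
    LinearMap.range (ρ.d (-1) - (a + (n : ℂ)) • (LinearMap.id : W →ₗ[ℂ] W))

theorem sum_single_add_apply {ι M N : Type*} [AddCommGroup ι] [AddCommMonoid M] [AddCommMonoid N]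
    (k : ι) (g : ι → M → N) (hg : ∀ j, g j 0 = 0) (f : ι →₀ M) (n : ι) :
    (f.sum fun j w => Finsupp.single (k + j) (g j w)) n = g (n - k) (f (n - k)) := by
  classical
  rw [Finsupp.sum_apply, Finsupp.sum_eq_single (n - k)]
  · rw [add_sub_cancel, Finsupp.single_eq_same]
  · intro j _ hj
    exact Finsupp.single_eq_of_ne (by rintro rfl; simp at hj)
  · intro _
    rw [hg, Finsupp.single_zero, Finsupp.coe_zero, Pi.zero_apply]

section GradedMap

variable {M N : Type*} [AddCommGroup M] [Module ℂ M] [AddCommGroup N] [Module ℂ N]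

theorem mem_gradedSub {U : ℤ → Submodule ℂ M} {f : ℤ →₀ M} :
    f ∈ gradedSub U ↔ ∀ j, f j ∈ U j := Iff.rfl

noncomputable def gradedMap (φ : ℤ → M →ₗ[ℂ] N) : (ℤ →₀ M) →ₗ[ℂ] (ℤ →₀ N) :=
  Finsupp.lsum ℂ fun j => Finsupp.lsingle j ∘ₗ φ j

@[simp]
theorem gradedMap_apply (φ : ℤ → M →ₗ[ℂ] N) (f : ℤ →₀ M) (n : ℤ) :
    gradedMap φ f n = φ n (f n) := by
  simpa [gradedMap, Finsupp.lsum_apply] using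
    sum_single_add_apply 0 (fun j w => φ j w) (fun j => map_zero _) f n

theorem ker_gradedMap (φ : ℤ → M →ₗ[ℂ] N) :
    LinearMap.ker (gradedMap φ) = gradedSub fun n => LinearMap.ker (φ n) := by
  ext f
  simp [mem_gradedSub, Finsupp.ext_iff]

theorem range_gradedMap (φ : ℤ → M →ₗ[ℂ] N) :
    LinearMap.range (gradedMap φ) = gradedSub fun n => LinearMap.range (φ n) := by
  classical
  refine le_antisymm ?_ fun g hg => ?_
  · rintro _ ⟨f, rfl⟩ n
    simp
  · choose u hu using hg
    refine ⟨∑ j ∈ g.support, Finsupp.single j (u j), Finsupp.ext fun n => ?_⟩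
    rw [gradedMap_apply, Finsupp.finsetSum_apply]
    by_cases hn : n ∈ g.support
    · rw [Finset.sum_eq_single n (fun j _ hj => Finsupp.single_eq_of_ne' hj) (absurd hn),
        Finsupp.single_eq_same, hu]
    · rw [Finset.sum_eq_zero fun j hj => Finsupp.single_eq_of_ne' (by rintro rfl; exact hn hj),
        map_zero, Finsupp.notMem_support_iff.mp hn]

end GradedMap

namespace BRep

variable {B : Type*} [AddCommGroup B] [Module ℂ B] (σ : BRep B)

noncomputable def expAct (m : ℤ) (w : B) : B :=
  ∑ᶠ i : ℕ, ((m : ℂ) ^ (i + 1) / (Nat.factorial (i + 1) : ℂ)) • σ.d i w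

theorem expAct_smul (m : ℤ) (t : ℂ) (w : B) : σ.expAct m (t • w) = t • σ.expAct m w := by
  rw [expAct, expAct, smul_finsum]
  simp_rw [map_smul, smul_comm t]

theorem Nact_apply (a c : ℂ) (m : ℤ) (f : ℤ →₀ B) (n : ℤ) :
    σ.Nact a c m f n = σ.expAct m (f (n - m)) + ((m : ℂ) * c + a + ((n - m : ℤ) : ℂ)) • f (n - m) :=
  sum_single_add_apply m _ (fun j => by simp) f n

end BRep

namespace WittRep

variable {W : Type*} [AddCommGroup W] [Module ℂ W] (ρ : WittRep W)

theorem d_d_apply {m n : ℤ} (hm : -1 ≤ m) (hn : -1 ≤ n) (w : W) :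
    ρ.d m (ρ.d n w) = ρ.d n (ρ.d m w) + ((n - m : ℤ) : ℂ) • ρ.d (m + n) w := by
  rw [← LinearMap.comp_apply, ← sub_eq_iff_eq_add', ← LinearMap.comp_apply,
    ← LinearMap.sub_apply, ρ.comm m n hm hn, LinearMap.smul_apply]

theorem d_d_neg_one_apply {i : ℤ} (hi : -1 ≤ i) (w : W) :
    ρ.d i (ρ.d (-1) w) = ρ.d (-1) (ρ.d i w) - ((i + 1 : ℤ) : ℂ) • ρ.d (i - 1) w := by
  rw [ρ.d_d_apply hi le_rfl, show (-1 - i : ℤ) = -(i + 1) by ring, show i + -1 = i - 1 by ring,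
    Int.cast_neg, neg_smul, ← sub_eq_add_neg]

theorem d_neg_one_pow_succ_apply (m : ℕ) (w : W) :
    (ρ.d (-1) ^ (m + 1)) w = ρ.d (-1) ((ρ.d (-1) ^ m) w) := by
  rw [pow_succ', Module.End.mul_apply]

/-! ### Eigenvectors of `d_{-1}` and of `𝔟` -/

theorem d_eq_zero_of_d_neg_one_eq_smul (hO : ρ.InO) {c : ℂ} {v : W} (hv : ρ.d (-1) v = c • v)
    {i : ℤ} (hi : 0 ≤ i) : ρ.d i v = 0 := by
  obtain ⟨N, hN⟩ := hO v
  rcases le_or_gt (N : ℤ) i with hNi | hiN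
  · exact hN i hNi
  refine Int.leInductionDown (m := N) (motive := fun j _ => 0 ≤ j → ρ.d j v = 0)
    (fun _ => hN N le_rfl) ?_ i hiN.le hi
  intro j _ ih hj
  have h := ρ.d_d_neg_one_apply (i := j) (by omega) v
  rw [hv, map_smul, ih (by omega), smul_zero, map_zero, zero_sub, eq_comm, neg_eq_zero,
    smul_eq_zero] at h
  exact h.resolve_left (by norm_cast; omega)

theorem isTrivial_of_d_eq_zero (hs : ρ.IsSimple) {v : W} (hv : v ≠ 0)
    (h : ∀ i : ℤ, -1 ≤ i → ρ.d i v = 0) : ρ.IsTrivial := by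
  have hinv : ρ.Invariant (ℂ ∙ v) := by
    intro i hi u hu
    obtain ⟨t, rfl⟩ := Submodule.mem_span_singleton.mp hu
    simp [h i hi]
  rcases hs.2 _ hinv with hbot | htop
  · exact absurd (Submodule.span_singleton_eq_bot.mp hbot) hv
  · intro i hi
    ext u
    obtain ⟨t, rfl⟩ := Submodule.mem_span_singleton.mp (htop ▸ Submodule.mem_top : u ∈ ℂ ∙ v)
    simp [h i hi]

theorem d_neg_one_sub_smul_injective (hO : ρ.InO) (hnt : ¬ ρ.IsTrivial) (hs : ρ.IsSimple)
    (c : ℂ) : Function.Injective (ρ.d (-1) - c • (LinearMap.id : W →ₗ[ℂ] W)) := by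
  rw [← LinearMap.ker_eq_bot, LinearMap.ker_eq_bot']
  intro v hv
  have hDv : ρ.d (-1) v = c • v := by simpa [sub_eq_zero] using hv
  have hb : ∀ i : ℤ, 0 ≤ i → ρ.d i v = 0 := fun i hi =>
    ρ.d_eq_zero_of_d_neg_one_eq_smul hO hDv hi
  have hD : ρ.d (-1) v = 0 := by
    have h := ρ.d_d_apply (m := -1) (n := 0) le_rfl (by norm_num) v
    rw [hb 0 le_rfl, map_zero, hDv, map_smul, hb 0 le_rfl, smul_zero] at h
    simpa using h.symm
  by_contra hv0
  refine hnt (ρ.isTrivial_of_d_eq_zero hs hv0 fun i hi => ?_)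
  rcases hi.eq_or_lt with rfl | hi
  · exact hD
  · exact hb i (by omega)

theorem d_neg_one_pow_ne_zero (hO : ρ.InO) (hnt : ¬ ρ.IsTrivial) (hs : ρ.IsSimple)
    {w : W} (hw : w ≠ 0) (m : ℕ) : (ρ.d (-1) ^ m) w ≠ 0 := by
  have hinj : Function.Injective (ρ.d (-1)) := by
    simpa using ρ.d_neg_one_sub_smul_injective hO hnt hs 0
  rw [Module.End.pow_apply]
  exact fun h => hw (hinj.iterate m (h.trans (iterate_map_zero _ m).symm))

theorem d_zero_d_neg_one_pow_apply {w : W} (hw : ρ.d 0 w = 0) (m : ℕ) :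
    ρ.d 0 ((ρ.d (-1) ^ m) w) = (-(m : ℂ)) • (ρ.d (-1) ^ m) w := by
  induction m with
  | zero => simpa using hw
  | succ m ih =>
    rw [ρ.d_neg_one_pow_succ_apply, ρ.d_d_neg_one_apply (by norm_num), ih, map_smul]
    push_cast
    module

theorem invariant_span_d_neg_one_pow_succ {w : W} (hw : ∀ i : ℤ, 0 ≤ i → ρ.d i w = 0) :
    ρ.Invariant (Submodule.span ℂ (Set.range fun m : ℕ => (ρ.d (-1) ^ (m + 1)) w)) := by
  set N := Submodule.span ℂ (Set.range fun m : ℕ => (ρ.d (-1) ^ (m + 1)) w)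
  have hgen (m : ℕ) : (ρ.d (-1) ^ (m + 1)) w ∈ N := Submodule.subset_span ⟨m, rfl⟩
  have hDN : N ≤ N.comap (ρ.d (-1)) := Submodule.span_le.mpr <| by
    rintro _ ⟨m, rfl⟩
    rw [SetLike.mem_coe, Submodule.mem_comap, ← ρ.d_neg_one_pow_succ_apply]
    exact hgen (m + 1)
  have hbN (m : ℕ) (i : ℤ) (hi : 0 ≤ i) : ρ.d i ((ρ.d (-1) ^ m) w) ∈ N := by
    induction m generalizing i with
    | zero => simp [hw i hi]
    | succ m ih =>
      rw [ρ.d_neg_one_pow_succ_apply, ρ.d_d_neg_one_apply (by omega)]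
      refine N.sub_mem (hDN (ih i hi)) (N.smul_mem _ ?_)
      rcases hi.eq_or_lt with rfl | hi
      · simpa [← ρ.d_neg_one_pow_succ_apply] using hgen m
      · exact ih (i - 1) (by omega)
  intro i hi
  rcases hi.eq_or_lt with rfl | hi
  · exact fun u hu => hDN hu
  · have hiN : N ≤ N.comap (ρ.d i) := Submodule.span_le.mpr <| by
      rintro _ ⟨m, rfl⟩
      exact hbN (m + 1) i (by omega)
    exact fun u hu => hiN hu

theorem eq_zero_of_d_nonneg_eq_zero (hO : ρ.InO) (hnt : ¬ ρ.IsTrivial) (hs : ρ.IsSimple)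
    {w : W} (hw : ∀ i : ℤ, 0 ≤ i → ρ.d i w = 0) : w = 0 := by
  by_contra hw0
  set N := Submodule.span ℂ (Set.range fun m : ℕ => (ρ.d (-1) ^ (m + 1)) w)
  have hD : (ρ.d (-1) ^ (0 + 1)) w ∈ N := Submodule.subset_span ⟨0, rfl⟩
  have hNtop : N = ⊤ := (hs.2 N (ρ.invariant_span_d_neg_one_pow_succ hw)).resolve_left fun h =>
    ρ.d_neg_one_pow_ne_zero hO hnt hs hw0 1 (by simpa [h] using hD)
  have hli : LinearIndependent ℂ fun m : ℕ => (ρ.d (-1) ^ m) w :=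
    Module.End.eigenvectors_linearIndependent' (ρ.d 0) (fun m : ℕ => -(m : ℂ))
      (fun m n h => by simpa using h) _ fun m =>
        ⟨Module.End.mem_eigenspace_iff.mpr (ρ.d_zero_d_neg_one_pow_apply (hw 0 le_rfl) m),
          ρ.d_neg_one_pow_ne_zero hO hnt hs hw0 m⟩
  refine hli.notMem_span_image (s := {m | m ≠ 0}) (x := 0) (by simp) ?_
  have hwN : w ∈ N := hNtop ▸ Submodule.mem_top
  refine Submodule.span_mono ?_ (by simpa using hwN)
  rintro _ ⟨m, rfl⟩
  exact ⟨m + 1, by simp, rfl⟩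

/-! ### The `𝔟`-socle -/

def killedAbove (r : ℤ) : Submodule ℂ W := ⨅ (i : ℤ) (_ : r < i), LinearMap.ker (ρ.d i)

theorem mem_killedAbove {r : ℤ} {v : W} : v ∈ ρ.killedAbove r ↔ ∀ i, r < i → ρ.d i v = 0 := by
  simp [killedAbove]

theorem bInvariant_killedAbove (r : ℕ) : ρ.BInvariant (ρ.killedAbove r) := by
  intro i hi v hv
  rw [mem_killedAbove] at hv ⊢
  intro j hj
  rw [ρ.d_d_apply (by omega) (by omega), hv j hj, map_zero, hv (j + i) (by omega), smul_zero,
    add_zero]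

theorem d_neg_one_pow_mem_killedAbove {r : ℕ} {v : W} (hv : v ∈ ρ.killedAbove r) (m : ℕ) :
    (ρ.d (-1) ^ m) v ∈ ρ.killedAbove (r + m) := by
  induction m with
  | zero => simpa using hv
  | succ m ih =>
    rw [mem_killedAbove] at ih ⊢
    intro i hi
    rw [ρ.d_neg_one_pow_succ_apply, ρ.d_d_neg_one_apply (by omega), ih i (by omega), map_zero,
      ih (i - 1) (by push_cast at hi; omega), smul_zero, sub_zero]

theorem exists_d_d_neg_one_pow_eq_smul (r m : ℕ) : ∃ c : ℂ, c ≠ 0 ∧ ∀ v ∈ ρ.killedAbove r,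
    ρ.d (r + m) ((ρ.d (-1) ^ m) v) = c • ρ.d r v := by
  induction m with
  | zero => exact ⟨1, one_ne_zero, fun v _ => by simp⟩
  | succ m ih =>
    obtain ⟨c, hc, hcv⟩ := ih
    refine ⟨-((r + m + 2 : ℤ) : ℂ) * c,
      mul_ne_zero (neg_ne_zero.mpr (Int.cast_ne_zero.mpr (by omega))) hc, fun v hv => ?_⟩
    have h := ρ.d_d_neg_one_apply (i := r + m + 1) (by omega) ((ρ.d (-1) ^ m) v)
    rw [ρ.mem_killedAbove.mp (ρ.d_neg_one_pow_mem_killedAbove hv m) (r + m + 1) (by omega),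
      map_zero, show (r : ℤ) + m + 1 - 1 = r + m by ring, hcv v hv] at h
    rw [ρ.d_neg_one_pow_succ_apply, show ((r : ℤ) + (m + 1 : ℕ)) = r + m + 1 by push_cast; ring, h]
    push_cast
    module

noncomputable def minOrder : ℕ := sInf {r : ℕ | ρ.killedAbove r ≠ ⊥}

noncomputable def minOrderSpace : Submodule ℂ W := ρ.killedAbove ρ.minOrder

theorem minOrderSpace_ne_bot (hO : ρ.InO) (hs : ρ.IsSimple) : ρ.minOrderSpace ≠ ⊥ := by
  refine Nat.sInf_mem (s := {r : ℕ | ρ.killedAbove r ≠ ⊥}) ?_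
  obtain ⟨v, hv⟩ := hs.1
  obtain ⟨n, hn⟩ := hO v
  exact ⟨n, (Submodule.ne_bot_iff _).mpr ⟨v, ρ.mem_killedAbove.mpr fun i hi => hn i hi.le, hv⟩⟩

theorem d_minOrder_ne_zero (hO : ρ.InO) (hnt : ¬ ρ.IsTrivial) (hs : ρ.IsSimple) {v : W}
    (hv : v ∈ ρ.minOrderSpace) (hv0 : v ≠ 0) : ρ.d ρ.minOrder v ≠ 0 := by
  intro h
  rw [minOrderSpace, mem_killedAbove] at hv
  have hle (i : ℤ) (hi : ρ.minOrder ≤ i) : ρ.d i v = 0 := by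
    rcases hi.eq_or_lt with rfl | hi
    exacts [h, hv i hi]
  rcases Nat.eq_zero_or_pos ρ.minOrder with h0 | hpos
  · exact hv0 (ρ.eq_zero_of_d_nonneg_eq_zero hO hnt hs fun i hi => hle i (by omega))
  · have hmin : ρ.minOrder ≤ ρ.minOrder - 1 := Nat.sInf_le <| (Submodule.ne_bot_iff _).mpr
      ⟨v, ρ.mem_killedAbove.mpr fun i hi => hle i (by omega), hv0⟩
    omega

noncomputable def pbw (U : Submodule ℂ W) : (ℕ →₀ U) →ₗ[ℂ] W :=
  Finsupp.lsum ℂ fun m : ℕ => (ρ.d (-1) ^ m) ∘ₗ U.subtype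

theorem pbw_apply (U : Submodule ℂ W) (f : ℕ →₀ U) :
    ρ.pbw U f = f.sum fun m x => (ρ.d (-1) ^ m) x :=
  Finsupp.lsum_apply _ _ _

theorem pbw_single (U : Submodule ℂ W) (m : ℕ) (x : U) :
    ρ.pbw U (Finsupp.single m x) = (ρ.d (-1) ^ m) x := by
  simp [pbw]

theorem d_neg_one_pbw (U : Submodule ℂ W) (f : ℕ →₀ U) :
    ρ.d (-1) (ρ.pbw U f) = ρ.pbw U (f.mapDomain (· + 1)) := by
  rw [pbw_apply, pbw_apply, map_finsuppSum, Finsupp.sum_mapDomain_index (by simp) (by simp)]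
  simp_rw [ρ.d_neg_one_pow_succ_apply]

theorem invariant_range_pbw {U : Submodule ℂ W} (hU : ρ.BInvariant U) :
    ρ.Invariant (LinearMap.range (ρ.pbw U)) := by
  have hD : ∀ y ∈ LinearMap.range (ρ.pbw U), ρ.d (-1) y ∈ LinearMap.range (ρ.pbw U) := by
    rintro _ ⟨g, rfl⟩
    exact ⟨g.mapDomain (· + 1), (ρ.d_neg_one_pbw U g).symm⟩
  have hgen (m : ℕ) (x : U) (i : ℤ) (hi : -1 ≤ i) :
      ρ.d i ((ρ.d (-1) ^ m) x) ∈ LinearMap.range (ρ.pbw U) := by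
    induction m generalizing i with
    | zero =>
      rcases hi.eq_or_lt with rfl | hi
      · exact ⟨Finsupp.single 1 x, by simp [pbw_single]⟩
      · exact ⟨Finsupp.single 0 ⟨ρ.d i x, hU i (by omega) _ x.2⟩, by simp [pbw_single]⟩
    | succ m ih =>
      rw [ρ.d_neg_one_pow_succ_apply, ρ.d_d_neg_one_apply hi]
      refine Submodule.sub_mem _ (hD _ (ih i hi)) ?_
      rcases hi.eq_or_lt with rfl | hi
      · simp
      · exact Submodule.smul_mem _ _ (ih (i - 1) (by omega))
  rintro i hi _ ⟨f, rfl⟩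
  rw [pbw_apply, map_finsuppSum]
  exact Submodule.sum_mem _ fun m _ => hgen m (f m) i hi

theorem range_pbw_eq_top (hs : ρ.IsSimple) {U : Submodule ℂ W} (hU : ρ.BInvariant U)
    (hU0 : U ≠ ⊥) : LinearMap.range (ρ.pbw U) = ⊤ := by
  refine (hs.2 _ (ρ.invariant_range_pbw hU)).resolve_left fun hbot => hU0 ?_
  rw [eq_bot_iff]
  intro u hu
  have : ρ.pbw U (Finsupp.single 0 ⟨u, hu⟩) ∈ LinearMap.range (ρ.pbw U) := ⟨_, rfl⟩
  simpa [hbot, pbw_single] using this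

/-- The leading coefficient of `f` survives `d_{minOrder + deg f}`. -/
theorem exists_d_pbw_mem_minOrderSpace_ne_zero (hO : ρ.InO) (hnt : ¬ ρ.IsTrivial)
    (hs : ρ.IsSimple) {f : ℕ →₀ ρ.minOrderSpace} (hf : f ≠ 0) :
    ∃ i : ℤ, 0 ≤ i ∧ ρ.d i (ρ.pbw _ f) ∈ ρ.minOrderSpace ∧ ρ.d i (ρ.pbw _ f) ≠ 0 := by
  have hne : f.support.Nonempty := Finsupp.support_nonempty_iff.mpr hf
  set M := f.support.max' hne
  obtain ⟨c, hc, hcv⟩ := ρ.exists_d_d_neg_one_pow_eq_smul ρ.minOrder M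
  have hlead : ρ.d (ρ.minOrder + M) (ρ.pbw _ f) = c • ρ.d ρ.minOrder (f M) := by
    rw [pbw_apply, map_finsuppSum, Finsupp.sum, Finset.sum_eq_single M, hcv _ (f M).2]
    · intro m hm hmM
      have hlt : m < M := lt_of_le_of_ne (f.support.le_max' m hm) hmM
      exact ρ.mem_killedAbove.mp (ρ.d_neg_one_pow_mem_killedAbove (f m).2 m) _ (by omega)
    · exact fun hM => absurd (f.support.max'_mem hne) hM
  have hfM : (f M : W) ≠ 0 := by
    simpa using Finsupp.mem_support_iff.mp (f.support.max'_mem hne)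
  refine ⟨ρ.minOrder + M, by positivity, ?_, ?_⟩ <;> rw [hlead]
  · exact Submodule.smul_mem _ _ (ρ.bInvariant_killedAbove _ _ (by positivity) _ (f M).2)
  · exact smul_ne_zero hc (ρ.d_minOrder_ne_zero hO hnt hs (f M).2 hfM)

theorem pbw_minOrderSpace_injective (hO : ρ.InO) (hnt : ¬ ρ.IsTrivial) (hs : ρ.IsSimple) :
    Function.Injective (ρ.pbw ρ.minOrderSpace) := by
  rw [← LinearMap.ker_eq_bot, LinearMap.ker_eq_bot']
  intro f hf
  by_contra hf0
  obtain ⟨i, -, -, hi⟩ := ρ.exists_d_pbw_mem_minOrderSpace_ne_zero hO hnt hs hf0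
  exact hi (by rw [hf, map_zero])

theorem pbw_mapRange_inclusion {U U' : Submodule ℂ W} (h : U ≤ U') (f : ℕ →₀ U) :
    ρ.pbw U' (Finsupp.mapRange.linearMap (Submodule.inclusion h) f) = ρ.pbw U f := by
  rw [pbw_apply, pbw_apply, Finsupp.mapRange.linearMap_apply,
    Finsupp.sum_mapRange_index (by simp)]
  rfl

theorem eq_minOrderSpace_of_le (hO : ρ.InO) (hnt : ¬ ρ.IsTrivial) (hs : ρ.IsSimple)
    {U : Submodule ℂ W} (hU : ρ.BInvariant U) (hU0 : U ≠ ⊥) (hle : U ≤ ρ.minOrderSpace) :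
    U = ρ.minOrderSpace := by
  refine le_antisymm hle fun v hv => ?_
  obtain ⟨g, hg⟩ : v ∈ LinearMap.range (ρ.pbw U) := ρ.range_pbw_eq_top hs hU hU0 ▸ trivial
  have hsingle : Finsupp.mapRange.linearMap (Submodule.inclusion hle) g =
      Finsupp.single 0 ⟨v, hv⟩ := by
    apply ρ.pbw_minOrderSpace_injective hO hnt hs
    rw [pbw_mapRange_inclusion, hg, pbw_single]
    rfl
  have h0 := congrArg (fun f => (f 0 : W)) hsingle
  simp only [Finsupp.mapRange.linearMap_apply, Finsupp.mapRange_apply,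
    Finsupp.single_eq_same] at h0
  exact h0 ▸ (g 0).2

theorem inf_minOrderSpace_ne_bot (hO : ρ.InO) (hnt : ¬ ρ.IsTrivial) (hs : ρ.IsSimple)
    {U : Submodule ℂ W} (hU : ρ.BInvariant U) (hU0 : U ≠ ⊥) : U ⊓ ρ.minOrderSpace ≠ ⊥ := by
  obtain ⟨u, hu, hu0⟩ := Submodule.exists_mem_ne_zero_of_ne_bot hU0
  have hV : ρ.BInvariant ρ.minOrderSpace := ρ.bInvariant_killedAbove _
  obtain ⟨f, rfl⟩ : u ∈ LinearMap.range (ρ.pbw ρ.minOrderSpace) :=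
    ρ.range_pbw_eq_top hs hV (ρ.minOrderSpace_ne_bot hO hs) ▸ trivial
  obtain ⟨i, hi, hiV, hi0⟩ := ρ.exists_d_pbw_mem_minOrderSpace_ne_zero hO hnt hs
    (f := f) (by rintro rfl; simp at hu0)
  exact (Submodule.ne_bot_iff _).mpr ⟨_, ⟨hU i hi _ hu, hiV⟩, hi0⟩

theorem soc_eq_minOrderSpace (hO : ρ.InO) (hnt : ¬ ρ.IsTrivial) (hs : ρ.IsSimple) :
    ρ.Soc = ρ.minOrderSpace := by
  have hV : ρ.BInvariant ρ.minOrderSpace := ρ.bInvariant_killedAbove _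
  refine le_antisymm (sSup_le ?_) (le_sSup ⟨hV, ρ.minOrderSpace_ne_bot hO hs,
    fun U hU hU0 hle => ρ.eq_minOrderSpace_of_le hO hnt hs hU hU0 hle⟩)
  rintro U ⟨hU, hU0, hmin⟩
  have hUV := hmin (U ⊓ ρ.minOrderSpace)
    (fun i hi x hx => ⟨hU i hi x hx.1, hV i hi x hx.2⟩)
    (ρ.inf_minOrderSpace_ne_bot hO hnt hs hU hU0) inf_le_left
  exact hUV ▸ inf_le_right

theorem pbw_soc_bijective (hO : ρ.InO) (hnt : ¬ ρ.IsTrivial) (hs : ρ.IsSimple) :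
    Function.Bijective (ρ.pbw ρ.Soc) := by
  rw [ρ.soc_eq_minOrderSpace hO hnt hs]
  exact ⟨ρ.pbw_minOrderSpace_injective hO hnt hs, LinearMap.range_eq_top.mp <|
    ρ.range_pbw_eq_top hs (ρ.bInvariant_killedAbove _) (ρ.minOrderSpace_ne_bot hO hs)⟩

theorem d_neg_one_pow_sub_mem_range (c : ℂ) (m : ℕ) (x : W) :
    (ρ.d (-1) ^ m) x - c ^ m • x ∈ LinearMap.range (ρ.d (-1) - c • LinearMap.id) := by
  obtain ⟨q, hq⟩ := ((Commute.one_right (ρ.d (-1))).smul_right c).sub_dvd_pow_sub_pow m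
  rw [smul_pow, one_pow, ← Module.End.one_eq_id] at *
  exact ⟨q x, by rw [← Module.End.mul_apply, ← hq]; simp⟩

section Projection

variable (hO : ρ.InO) (hnt : ¬ ρ.IsTrivial) (hs : ρ.IsSimple)

/-- Evaluation at `d_{-1} = c` under `W ≅ ℂ[d_{-1}] ⊗ Soc_𝔟 W`. -/
noncomputable def socProj (c : ℂ) : W →ₗ[ℂ] ρ.Soc :=
  (Finsupp.lsum ℂ fun m : ℕ => c ^ m • LinearMap.id) ∘ₗ
    (LinearEquiv.ofBijective _ (ρ.pbw_soc_bijective hO hnt hs)).symm.toLinearMap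

theorem socProj_pbw (c : ℂ) (f : ℕ →₀ ρ.Soc) :
    ρ.socProj hO hnt hs c (ρ.pbw _ f) = f.sum fun m x => c ^ m • x := by
  have hf : (LinearEquiv.ofBijective _ (ρ.pbw_soc_bijective hO hnt hs)).symm (ρ.pbw _ f) = f :=
    (LinearEquiv.ofBijective _ _).symm_apply_apply f
  rw [socProj, LinearMap.comp_apply, LinearEquiv.coe_coe, hf, Finsupp.lsum_apply]
  rfl

theorem socProj_coe (c : ℂ) (s : ρ.Soc) : ρ.socProj hO hnt hs c s = s := by
  simpa [pbw_single] using ρ.socProj_pbw hO hnt hs c (Finsupp.single 0 s)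

theorem socProj_d_neg_one (c : ℂ) (w : W) :
    ρ.socProj hO hnt hs c (ρ.d (-1) w) = c • ρ.socProj hO hnt hs c w := by
  obtain ⟨f, rfl⟩ := (ρ.pbw_soc_bijective hO hnt hs).2 w
  rw [d_neg_one_pbw, socProj_pbw, socProj_pbw,
    Finsupp.sum_mapDomain_index (by simp) (by simp [smul_add]), Finsupp.smul_sum]
  simp_rw [pow_succ', mul_smul]

theorem ker_socProj (c : ℂ) :
    LinearMap.ker (ρ.socProj hO hnt hs c) = LinearMap.range (ρ.d (-1) - c • LinearMap.id) := by
  apply le_antisymm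
  · intro w hw
    obtain ⟨f, rfl⟩ := (ρ.pbw_soc_bijective hO hnt hs).2 w
    rw [LinearMap.mem_ker, socProj_pbw] at hw
    have hsub : ρ.pbw _ f - ((f.sum fun m x => c ^ m • x : ρ.Soc) : W) =
        f.sum fun m x => (ρ.d (-1) ^ m) x - c ^ m • (x : W) := by
      simp [pbw_apply, Finsupp.sum]
    rw [hw, Submodule.coe_zero, sub_zero] at hsub
    rw [hsub]
    exact Submodule.finsuppSum_mem _ _ _ _ fun m _ => ρ.d_neg_one_pow_sub_mem_range c m _
  · rintro _ ⟨u, rfl⟩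
    simp [socProj_d_neg_one]

end Projection

/-! ### The operators `e^{kt} d/dt` -/

theorem E_eq_sum (k : ℤ) {w : W} {N : ℕ} (hN : ∀ i : ℤ, N ≤ i → ρ.d i w = 0) :
    ρ.E k w = ∑ i ∈ Finset.range (N + 1),
      ((k : ℂ) ^ i / (Nat.factorial i : ℂ)) • ρ.d ((i : ℤ) - 1) w := by
  refine finsum_eq_sum_of_support_subset _ fun i hi => ?_
  by_contra hiN
  simp only [Finset.coe_range, Set.mem_Iio, not_lt] at hiN
  exact hi (by dsimp only; rw [hN _ (by omega), smul_zero])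

theorem E_eq_d_neg_one_add_sum (k : ℤ) {w : W} {N : ℕ} (hN : ∀ i : ℤ, N ≤ i → ρ.d i w = 0) :
    ρ.E k w = ρ.d (-1) w + ∑ i ∈ Finset.range N,
      ((k : ℂ) ^ (i + 1) / (Nat.factorial (i + 1) : ℂ)) • ρ.d i w := by
  rw [ρ.E_eq_sum k hN, Finset.sum_range_succ']
  simp [add_comm]

theorem E_add (hO : ρ.InO) (k : ℤ) (x y : W) : ρ.E k (x + y) = ρ.E k x + ρ.E k y := by
  obtain ⟨Nx, hNx⟩ := hO x
  obtain ⟨Ny, hNy⟩ := hO y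
  have hx (i : ℤ) (hi : ((max Nx Ny : ℕ) : ℤ) ≤ i) : ρ.d i x = 0 := hNx i (by omega)
  have hy (i : ℤ) (hi : ((max Nx Ny : ℕ) : ℤ) ≤ i) : ρ.d i y = 0 := hNy i (by omega)
  rw [ρ.E_eq_sum k hx, ρ.E_eq_sum k hy,
    ρ.E_eq_sum k fun i hi => by rw [map_add, hx i hi, hy i hi, add_zero],
    ← Finset.sum_add_distrib]
  simp_rw [map_add, smul_add]

theorem E_smul (k : ℤ) (t : ℂ) (w : W) : ρ.E k (t • w) = t • ρ.E k w := by
  rw [E, E, smul_finsum]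
  simp_rw [map_smul, smul_comm t]

noncomputable def expOp (hO : ρ.InO) (k : ℤ) : W →ₗ[ℂ] W where
  toFun := ρ.E k
  map_add' := ρ.E_add hO k
  map_smul' := ρ.E_smul k

theorem expOp_apply (hO : ρ.InO) (k : ℤ) (w : W) : ρ.expOp hO k w = ρ.E k w := rfl

theorem E_d_neg_one (hO : ρ.InO) (k : ℤ) (w : W) :
    ρ.E k (ρ.d (-1) w) = ρ.d (-1) (ρ.E k w) - (k : ℂ) • ρ.E k w := by
  obtain ⟨N, hN⟩ := hO w
  have hw (i : ℤ) (hi : ((N + 1 : ℕ) : ℤ) ≤ i) : ρ.d i w = 0 := hN i (by omega)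
  have hDw (i : ℤ) (hi : ((N + 1 : ℕ) : ℤ) ≤ i) : ρ.d i (ρ.d (-1) w) = 0 := by
    rw [ρ.d_d_neg_one_apply (by omega), hw i hi, map_zero, hN _ (by omega), smul_zero, sub_zero]
  have hcoeff (j : ℕ) : (k : ℂ) ^ (j + 1) / (Nat.factorial (j + 1) : ℂ) * ((j + 1 : ℕ) : ℂ) =
      k * ((k : ℂ) ^ j / (Nat.factorial j : ℂ)) := by
    rw [Nat.factorial_succ]
    push_cast
    field_simp
    ring
  rw [ρ.E_eq_sum k hDw]
  nth_rw 1 [ρ.E_eq_sum k hw]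
  rw [ρ.E_eq_sum k hN, map_sum, Finset.smul_sum]
  have hterm (i : ℕ) : ρ.d ((i : ℤ) - 1) (ρ.d (-1) w) =
      ρ.d (-1) (ρ.d ((i : ℤ) - 1) w) - (i : ℂ) • ρ.d ((i : ℤ) - 2) w := by
    rw [ρ.d_d_neg_one_apply (by omega), show (i : ℤ) - 1 - 1 = i - 2 by ring,
      sub_add_cancel, Int.cast_natCast]
  simp_rw [hterm, smul_sub, Finset.sum_sub_distrib, map_smul]
  congr 1
  rw [Finset.sum_range_succ']
  simp only [CharP.cast_eq_zero, smul_zero, add_zero, smul_smul, zero_smul]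
  refine Finset.sum_congr rfl fun j _ => ?_
  rw [← hcoeff j, show ((j + 1 : ℕ) : ℤ) - 2 = j - 1 by push_cast; ring]

section Action

variable (hO : ρ.InO)

noncomputable def lactOp (lam : ℂ) (k : ℤ) (c : ℂ) : W →ₗ[ℂ] W :=
  lam ^ k • ρ.expOp hO k - ρ.d (-1) + c • LinearMap.id

theorem Lact_apply (lam a b : ℂ) (k : ℤ) (f : ℤ →₀ W) (n : ℤ) :
    ρ.Lact lam a b k f n = ρ.lactOp hO lam k (a + k * b + ((n - k : ℤ) : ℂ)) (f (n - k)) :=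
  sum_single_add_apply k _ (fun j => by simp [E]) f n

theorem lactOp_comp_d_neg_one_sub (lam : ℂ) (k : ℤ) (c : ℂ) :
    ρ.lactOp hO lam k (c + k) ∘ₗ (ρ.d (-1) - c • LinearMap.id) =
      (ρ.d (-1) - (c + k) • LinearMap.id) ∘ₗ ρ.lactOp hO lam k c := by
  ext w
  simp only [lactOp, LinearMap.comp_apply, LinearMap.sub_apply, LinearMap.add_apply,
    LinearMap.smul_apply, LinearMap.id_apply, expOp_apply, map_sub, map_smul, map_add,
    ρ.E_d_neg_one hO]
  module

end Action

section Quotient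

variable (hO : ρ.InO) (hnt : ¬ ρ.IsTrivial) (hs : ρ.IsSimple)
  (σ : BRep ρ.Soc) (hσ : ∀ (i : ℕ) (w : ρ.Soc), (σ.d i w : W) = ρ.d (i : ℤ) (w : W))
include hO hσ

theorem coe_expAct (k : ℤ) (s : ρ.Soc) : (σ.expAct k s : W) = ρ.E k s - ρ.d (-1) s := by
  obtain ⟨N, hN⟩ := hO s
  have hσN (i : ℕ) (hi : N ≤ i) : σ.d i s = 0 := Subtype.ext (by simpa [hσ] using hN i (by omega))
  rw [ρ.E_eq_d_neg_one_add_sum k hN, add_sub_cancel_left, BRep.expAct,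
    finsum_eq_sum_of_support_subset (s := Finset.range N) _ fun i hi => ?_]
  · simp [hσ]
  · by_contra hiN
    simp only [Finset.coe_range, Set.mem_Iio, not_lt] at hiN
    exact hi (by dsimp only; rw [hσN i hiN, smul_zero])

theorem socProj_E_coe (c : ℂ) (k : ℤ) (s : ρ.Soc) :
    ρ.socProj hO hnt hs c (ρ.E k s) = σ.expAct k s + c • s := by
  rw [← sub_add_cancel (ρ.E k s) (ρ.d (-1) s), ← ρ.coe_expAct hO σ hσ, map_add, socProj_coe,
    socProj_d_neg_one, socProj_coe]

theorem socProj_E (c : ℂ) (k : ℤ) (w : W) :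
    ρ.socProj hO hnt hs (c + k) (ρ.E k w) =
      σ.expAct k (ρ.socProj hO hnt hs c w) + (c + k) • ρ.socProj hO hnt hs c w := by
  obtain ⟨y, hy⟩ : w - ρ.socProj hO hnt hs c w ∈
      LinearMap.range (ρ.d (-1) - c • (LinearMap.id : W →ₗ[ℂ] W)) := by
    rw [← ρ.ker_socProj hO hnt hs c, LinearMap.mem_ker, map_sub, socProj_coe, sub_self]
  have hEy : ρ.E k ((ρ.d (-1) - c • (LinearMap.id : W →ₗ[ℂ] W)) y) =
      (ρ.d (-1) - (c + k) • (LinearMap.id : W →ₗ[ℂ] W)) (ρ.E k y) := by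
    simp only [LinearMap.sub_apply, LinearMap.smul_apply, LinearMap.id_apply]
    rw [← ρ.expOp_apply hO, map_sub, map_smul, expOp_apply, expOp_apply, ρ.E_d_neg_one hO]
    module
  have hw : ρ.E k w = ρ.E k (ρ.socProj hO hnt hs c w) +
      ρ.E k ((ρ.d (-1) - c • (LinearMap.id : W →ₗ[ℂ] W)) y) := by
    rw [← ρ.E_add hO, hy, add_sub_cancel]
  have hker : ρ.socProj hO hnt hs (c + k)
      ((ρ.d (-1) - (c + k) • (LinearMap.id : W →ₗ[ℂ] W)) (ρ.E k y)) = 0 := by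
    rw [← LinearMap.mem_ker, ker_socProj]
    exact LinearMap.mem_range_self _ _
  rw [hw, map_add, hEy, hker, add_zero, ρ.socProj_E_coe hO hnt hs σ hσ]

theorem socProj_lactOp (lam c : ℂ) (k : ℤ) (w : W) :
    ρ.socProj hO hnt hs (c + k) (ρ.lactOp hO lam k (c + k) w) =
      lam ^ k • (σ.expAct k (ρ.socProj hO hnt hs c w) + (c + k) • ρ.socProj hO hnt hs c w) := by
  simp only [lactOp, LinearMap.add_apply, LinearMap.sub_apply, LinearMap.smul_apply, expOp_apply,
    LinearMap.id_apply, map_add, map_sub, map_smul, ρ.socProj_E hO hnt hs σ hσ,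
    socProj_d_neg_one]
  abel

end Quotient

/-! ### `L'(W, λ, a, 1)` and the quotient -/

section Maps

variable (hO : ρ.InO) (hnt : ¬ ρ.IsTrivial) (hs : ρ.IsSimple)

noncomputable def lprimeMap (a : ℂ) : (ℤ →₀ W) →ₗ[ℂ] (ℤ →₀ W) :=
  gradedMap fun n : ℤ => ρ.d (-1) - (a + n) • LinearMap.id

theorem range_lprimeMap (a : ℂ) : LinearMap.range (ρ.lprimeMap a) = ρ.Lprime a :=
  range_gradedMap _

include hO hnt hs in
theorem lprimeMap_injective (a : ℂ) : Function.Injective (ρ.lprimeMap a) := by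
  rw [← LinearMap.ker_eq_bot, lprimeMap, ker_gradedMap, eq_bot_iff]
  intro f hf
  ext n
  exact ρ.d_neg_one_sub_smul_injective hO hnt hs _ ((hf n).trans (map_zero _).symm)

include hO in
theorem lprimeMap_Lact (lam a : ℂ) (k : ℤ) (f : ℤ →₀ W) :
    ρ.lprimeMap a (ρ.Lact lam a 0 k f) = ρ.Lact lam a 1 k (ρ.lprimeMap a f) := by
  ext n
  simp only [lprimeMap, gradedMap_apply, ρ.Lact_apply hO]
  set c : ℂ := a + ((n - k : ℤ) : ℂ)
  rw [show a + k * 0 + ((n - k : ℤ) : ℂ) = c by ring, show a + k * 1 + ((n - k : ℤ) : ℂ) = c + k by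
    ring, show a + (n : ℂ) = c + k by push_cast [c]; ring]
  exact (LinearMap.congr_fun (ρ.lactOp_comp_d_neg_one_sub hO lam k c) (f (n - k))).symm

/-- Twisting the `t^n`-component by `λ^{-n}` absorbs the factor `λ^k` in the action of `d_k`. -/
noncomputable def quotMap (lam a : ℂ) : (ℤ →₀ W) →ₗ[ℂ] (ℤ →₀ ρ.Soc) :=
  gradedMap fun n : ℤ => lam ^ (-n) • ρ.socProj hO hnt hs (a + n)

variable {lam : ℂ} (hlam : lam ≠ 0)
include hlam

theorem quotMap_surjective (a : ℂ) : Function.Surjective (ρ.quotMap hO hnt hs lam a) := by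
  rw [← LinearMap.range_eq_top, quotMap, range_gradedMap, eq_top_iff]
  intro g _ n
  refine ⟨lam ^ n • (g n : W), ?_⟩
  rw [LinearMap.smul_apply, map_smul, socProj_coe, smul_smul, ← zpow_add₀ hlam, neg_add_cancel,
    zpow_zero, one_smul]

theorem ker_quotMap (a : ℂ) : LinearMap.ker (ρ.quotMap hO hnt hs lam a) = ρ.Lprime a := by
  rw [quotMap, ker_gradedMap]
  simp_rw [LinearMap.ker_smul _ _ (zpow_ne_zero _ hlam), ker_socProj]
  rfl

theorem quotMap_Lact (σ : BRep ρ.Soc)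
    (hσ : ∀ (i : ℕ) (w : ρ.Soc), (σ.d i w : W) = ρ.d (i : ℤ) (w : W)) (a : ℂ) (k : ℤ)
    (f : ℤ →₀ W) :
    ρ.quotMap hO hnt hs lam a (ρ.Lact lam a 1 k f) =
      σ.Nact a 1 k (ρ.quotMap hO hnt hs lam a f) := by
  refine Finsupp.ext fun n => ?_
  simp only [quotMap, gradedMap_apply, ρ.Lact_apply hO, σ.Nact_apply, LinearMap.smul_apply]
  set c : ℂ := a + ((n - k : ℤ) : ℂ)
  rw [show a + k * 1 + ((n - k : ℤ) : ℂ) = c + k by ring, show a + (n : ℂ) = c + k by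
    push_cast [c]; ring, ρ.socProj_lactOp hO hnt hs σ hσ, σ.expAct_smul, smul_smul,
    ← zpow_add₀ hlam, show -n + k = -(n - k) by ring,
    show (k : ℂ) * 1 + a + ((n - k : ℤ) : ℂ) = c + k by simp only [c]; ring]
  module

end Maps

end WittRep

theorem stmt8 {W : Type*} [AddCommGroup W] [Module ℂ W] (ρ : WittRep W)
    (hO : ρ.InO) (hnt : ¬ ρ.IsTrivial) (hs : ρ.IsSimple)
    (lam a : ℂ) (hlam : lam ≠ 0)
    (σ : BRep ↥ρ.Soc)
    (hσ : ∀ (i : ℕ) (w : ↥ρ.Soc), (↑(σ.d i w) : W) = ρ.d (i : ℤ) (↑w : W)) :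
    (∀ k : ℤ, ∀ f ∈ ρ.Lprime a, ρ.Lact lam a 1 k f ∈ ρ.Lprime a) ∧
    (∃ τ : (ℤ →₀ W) ≃ₗ[ℂ] ↥(ρ.Lprime a),
      ∀ (k : ℤ) (f : ℤ →₀ W),
        (↑(τ (ρ.Lact lam a 0 k f)) : ℤ →₀ W) = ρ.Lact lam a 1 k ↑(τ f)) ∧
    (∃ π : (ℤ →₀ W) →ₗ[ℂ] (ℤ →₀ ↥ρ.Soc),
      Function.Surjective π ∧ LinearMap.ker π = ρ.Lprime a ∧
      ∀ (k : ℤ) (f : ℤ →₀ W), π (ρ.Lact lam a 1 k f) = σ.Nact a 1 k (π f)) := by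
  refine ⟨fun k f hf => ?_,
    ⟨(LinearEquiv.ofInjective _ (ρ.lprimeMap_injective hO hnt hs a)).trans
      (LinearEquiv.ofEq _ _ (ρ.range_lprimeMap a)), ρ.lprimeMap_Lact hO lam a⟩,
    ρ.quotMap hO hnt hs lam a, ρ.quotMap_surjective hO hnt hs hlam a,
    ρ.ker_quotMap hO hnt hs hlam a, ρ.quotMap_Lact hO hnt hs hlam σ hσ a⟩
  rw [← ρ.range_lprimeMap] at hf ⊢
  obtain ⟨g, rfl⟩ := hf
  exact ⟨_, ρ.lprimeMap_Lact hO lam a k g⟩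
end

section
/- Let W ∈ O_𝔚 be a highest weight 𝔚-module with highest weight vector w₀ of highest weight b' ≠ 0, and let a ∈ ℂ. Then L₀(a, b') = span{d₁^i · (w₀ ⊗ t^{2j}) : i ∈ ℤ≥0, j ∈ ℤ} and L₁(a, b') = span{d₁^i · (w₀ ⊗ t^{2j+1}) : i ∈ ℤ≥0, j ∈ ℤ} are Virasoro submodules of L(W, −1, a, b' + 1), and L(W, −1, a, b' + 1) = L₀(a, b') ⊕ L₁(a, b'). -/
/-!
On a module in `O_𝔚` the operators `E_k = e^{kt} d/dt = Σ_i (k^i / i!) d_{i-1}` are finite sums and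
satisfy `[E_m, E_n] = (n - m) E_{m+n}` (with `E_0 = d_{-1}`), which is exactly what makes
`L(W, λ, a, b)` a Virasoro module.

For `λ = -1` and `b = b' + 1`, the highest weight vector gives `d_k (w₀ ⊗ t^p) = c (w₀ ⊗ t^{k+p})`
for even `k` and `d_k (w₀ ⊗ t^p) = d_1 (w₀ ⊗ t^{k+p-1})` for odd `k`; together with
`[d_k, d_1] = (1 - k) d_{k+1}` this shows that the span of the `d_1`-orbits of the `w₀ ⊗ t^p` with
`p` of fixed parity is a submodule.

In degree `m`, `d_1^i (w₀ ⊗ t^{m-i}) = X_i ⊗ t^m` with `X_i ≡ (-2)^i d_{-1}^i w₀` modulo lower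
powers of `d_{-1}`. When `b' ≠ 0` the vectors `d_{-1}^i w₀` are nonzero (by the action of `d_1` and
`d_2`) eigenvectors of `d_0` with distinct eigenvalues `b' - i`, hence a basis of `W`; so the `X_i`
are a basis too, and sorting them by the parity of `m - i` splits `L` into `L₀ ⊕ L₁`.
-/

open Finset Submodule
open scoped Nat

theorem Finset.sum_range_sum_range_eq_sum_antidiagonal {M : Type*} [AddCommMonoid M] {K : ℕ}
    (f : ℕ → ℕ → M) (hf : ∀ i j, K ≤ i + j → f i j = 0) :
    ∑ i ∈ range K, ∑ j ∈ range K, f i j = ∑ s ∈ range K, ∑ p ∈ antidiagonal s, f p.1 p.2 := by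
  set T := {p ∈ range K ×ˢ range K | p.1 + p.2 < K}
  rw [← sum_product', ← sum_filter_of_ne (p := fun p => p.1 + p.2 < K)
    (fun p _ hp => not_le.1 fun h => hp (hf p.1 p.2 h)),
    ← sum_fiberwise_of_maps_to (s := T) (g := fun p => p.1 + p.2) (t := range K)
      (fun p hp => mem_range.2 (mem_filter.1 hp).2)]
  refine sum_congr rfl fun s hs => sum_congr ?_ fun _ _ => rfl
  ext ⟨i, j⟩
  simp only [T, mem_filter, mem_product, mem_range, HasAntidiagonal.mem_antidiagonal] at hs ⊢
  omega

theorem Complex.sum_antidiagonal_pow_div_factorial (x y : ℂ) (r : ℕ) :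
    ∑ p ∈ antidiagonal r, x ^ p.1 / p.1 ! * (y ^ p.2 / p.2 !) = (x + y) ^ r / r ! := by
  rw [(Commute.all x y).add_pow', sum_div]
  refine sum_congr rfl fun p hp => ?_
  rw [HasAntidiagonal.mem_antidiagonal] at hp
  subst hp
  have h := Nat.add_choose_mul_factorial_mul_factorial p.1 p.2
  have hchoose : ((p.1 + p.2).choose p.2 : ℂ) ≠ 0 := by
    exact_mod_cast (Nat.choose_pos (Nat.le_add_left p.2 p.1)).ne'
  rw [nsmul_eq_mul, Nat.choose_symm_add, ← h]
  push_cast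
  field_simp

theorem Complex.sum_antidiagonal_succ_snd_mul_pow_div_factorial (x y : ℂ) (r : ℕ) :
    ∑ p ∈ antidiagonal (r + 1), (p.2 : ℂ) * (x ^ p.1 / p.1 ! * (y ^ p.2 / p.2 !)) =
      y * ((x + y) ^ r / r !) := by
  rw [Nat.sum_antidiagonal_succ', ← sum_antidiagonal_pow_div_factorial, mul_sum]
  simp only [Nat.cast_zero, zero_mul, zero_add]
  refine sum_congr rfl fun p _ => ?_
  rw [Nat.factorial_succ]
  push_cast
  field_simp
  ring

theorem Complex.sum_antidiagonal_succ_sub_mul_pow_div_factorial (x y : ℂ) (r : ℕ) :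
    ∑ p ∈ antidiagonal (r + 1), ((p.2 : ℂ) - p.1) * (x ^ p.1 / p.1 ! * (y ^ p.2 / p.2 !)) =
      (y - x) * ((x + y) ^ r / r !) := by
  have hfst := sum_antidiagonal_succ_snd_mul_pow_div_factorial y x r
  rw [← Nat.sum_antidiagonal_swap, add_comm y x] at hfst
  simp only [Prod.fst_swap, Prod.snd_swap, mul_comm (y ^ _ / _)] at hfst
  simp only [sub_mul, sum_sub_distrib, sum_antidiagonal_succ_snd_mul_pow_div_factorial, hfst]

section Triangular

variable {K V : Type*} [Field K] [AddCommGroup V] [Module K V]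

theorem linearIndependent_of_notMem_span_image_Iio {u : ℕ → V}
    (hu : ∀ n, u n ∉ span K (u '' Set.Iio n)) : LinearIndependent K u := by
  have hIio (n : ℕ) : LinearIndepOn K u (Set.Iio n) := by
    induction n with
    | zero => simp
    | succ n ih =>
      rw [show Set.Iio (n + 1) = insert n (Set.Iio n) by ext; simp]
      exact ih.insert (hu n)
  rw [← linearIndepOn_univ_iff, ← Set.iUnion_Iio]
  exact linearIndepOn_iUnion_of_directed
    (Monotone.directed_le fun _ _ h => Set.Iio_subset_Iio h) hIio

variable {u v : ℕ → V} {c : ℕ → K}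

theorem span_image_Iio_eq_of_sub_smul_mem (hc : ∀ n, c n ≠ 0)
    (huv : ∀ n, u n - c n • v n ∈ span K (v '' Set.Iio n)) (n : ℕ) :
    span K (u '' Set.Iio n) = span K (v '' Set.Iio n) := by
  induction n using Nat.strong_induction_on with
  | _ n ih =>
    have hmono {j : ℕ} (hj : j < n) (w : ℕ → V) :
        span K (w '' Set.Iio j) ≤ span K (w '' Set.Iio n) :=
      span_mono (Set.image_mono (Set.Iio_subset_Iio hj.le))
    apply le_antisymm <;> refine span_le.2 ?_ <;> rintro _ ⟨j, hj, rfl⟩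
    · rw [SetLike.mem_coe, ← sub_add_cancel (u j) (c j • v j)]
      exact add_mem (hmono hj v (huv j)) (smul_mem _ _ (subset_span ⟨j, hj, rfl⟩))
    · refine (smul_mem_iff _ (hc j)).1 ?_
      rw [← sub_sub_cancel (u j) (c j • v j)]
      exact sub_mem (subset_span ⟨j, hj, rfl⟩) (hmono hj u ((ih j hj).ge (huv j)))

theorem LinearIndependent.of_sub_smul_mem_span_image_Iio (hv : LinearIndependent K v)
    (hc : ∀ n, c n ≠ 0) (huv : ∀ n, u n - c n • v n ∈ span K (v '' Set.Iio n)) :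
    LinearIndependent K u := by
  refine linearIndependent_of_notMem_span_image_Iio fun n hn => ?_
  rw [span_image_Iio_eq_of_sub_smul_mem hc huv] at hn
  refine hv.notMem_span_image (Set.self_notMem_Iio (a := n)) ((smul_mem_iff _ (hc n)).1 ?_)
  rw [← sub_sub_cancel (u n) (c n • v n)]
  exact sub_mem hn (huv n)

theorem span_range_eq_of_sub_smul_mem (hc : ∀ n, c n ≠ 0)
    (huv : ∀ n, u n - c n • v n ∈ span K (v '' Set.Iio n)) :
    span K (Set.range u) = span K (Set.range v) := by
  rw [← Set.image_univ, ← Set.iUnion_Iio, Set.image_iUnion, span_iUnion, ← Set.image_univ,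
    ← Set.iUnion_Iio, Set.image_iUnion, span_iUnion]
  simp only [span_image_Iio_eq_of_sub_smul_mem hc huv]

end Triangular

namespace VirasoroRep

variable {V : Type*} [AddCommGroup V] [Module ℂ V] (R : VirasoroRep V)

theorem d_d_one_apply (k : ℤ) (v : V) :
    R.d k (R.d 1 v) = R.d 1 (R.d k v) + ((1 - k : ℤ) : ℂ) • R.d (k + 1) v := by
  have h := LinearMap.congr_fun (R.comm k 1) v
  simp only [LinearMap.sub_apply, LinearMap.comp_apply, LinearMap.add_apply,
    LinearMap.smul_apply] at h
  rw [← sub_eq_iff_eq_add', h]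
  norm_num

theorem actInvariant_span_iterate_d_one {ι : Type*} (g : ι → V)
    (hg : ∀ k j, R.d k (g j) ∈ span ℂ {x | ∃ (i : ℕ) (j : ι), x = (R.d 1)^[i] (g j)}) :
    ActInvariant (fun k => R.d k) (span ℂ {x | ∃ (i : ℕ) (j : ι), x = (R.d 1)^[i] (g j)}) := by
  set M := span ℂ {x | ∃ (i : ℕ) (j : ι), x = (R.d 1)^[i] (g j)}
  have hmap {f : V →ₗ[ℂ] V} (hf : ∀ (i : ℕ) (j : ι), f ((R.d 1)^[i] (g j)) ∈ M) :
      ∀ u ∈ M, f u ∈ M := fun u hu =>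
    (span_le (p := M.comap f)).2 (by rintro _ ⟨i, j, rfl⟩; exact hf i j) hu
  have hone : ∀ u ∈ M, R.d 1 u ∈ M := hmap fun i j =>
    subset_span ⟨i + 1, j, (Function.iterate_succ_apply' _ _ _).symm⟩
  have horbit (i : ℕ) : ∀ k j, R.d k ((R.d 1)^[i] (g j)) ∈ M := by
    induction i with
    | zero => exact hg
    | succ i ih =>
      intro k j
      rw [Function.iterate_succ_apply', d_d_one_apply]
      exact add_mem (hone _ (ih k j)) (smul_mem _ _ (ih (k + 1) j))
  exact fun k => hmap (horbit · k)

end VirasoroRep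

namespace WittRep

variable {W : Type*} [AddCommGroup W] [Module ℂ W]

section

variable (ρ : WittRep W)

theorem d_comm_apply {m n : ℤ} (hm : -1 ≤ m) (hn : -1 ≤ n) (v : W) :
    ρ.d m (ρ.d n v) = ρ.d n (ρ.d m v) + ((n - m : ℤ) : ℂ) • ρ.d (m + n) v := by
  rw [← sub_eq_iff_eq_add', ← LinearMap.comp_apply, ← LinearMap.comp_apply,
    ← LinearMap.sub_apply, ρ.comm m n hm hn, LinearMap.smul_apply]

theorem d_d_eq_zero {N : ℕ} {v : W} (hv : ∀ i : ℤ, N ≤ i → ρ.d i v = 0) {i j : ℤ}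
    (hi : N + 1 ≤ i) (hj : -1 ≤ j) : ρ.d i (ρ.d j v) = 0 := by
  rw [ρ.d_comm_apply (by omega) hj, hv i (by omega), hv (i + j) (by omega), map_zero, smul_zero,
    add_zero]

theorem E_eq_sum_range {N : ℕ} {v : W} (hv : ∀ i : ℕ, N ≤ i → ρ.d (i - 1) v = 0) (k : ℤ) :
    ρ.E k v = ∑ i ∈ range N, ((k : ℂ) ^ i / i !) • ρ.d (i - 1) v := by
  refine finsum_eq_sum_of_support_subset _ fun i hi => ?_
  by_contra hiN
  exact hi (by simp [hv i (by simpa using hiN)])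

theorem E_zero_apply (v : W) : ρ.E 0 v = ρ.d (-1) v := by
  rw [E, finsum_eq_single _ 0 fun i hi => by simp [hi]]
  simp

theorem E_apply_zero (k : ℤ) : ρ.E k 0 = 0 := by
  simp [E]

/-- The `W`-component of `d_k · (v ⊗ t^j)` in `L(W, λ, a, b)`. -/
noncomputable def coeff (lam a b : ℂ) (k j : ℤ) (v : W) : W :=
  lam ^ k • ρ.E k v - ρ.d (-1) v + (a + k * b + j) • v

theorem Lact_single (lam a b : ℂ) (k j : ℤ) (v : W) :
    ρ.Lact lam a b k (Finsupp.single j v) = Finsupp.single (k + j) (ρ.coeff lam a b k j v) :=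
  Finsupp.sum_single_index (by simp [E_apply_zero])

end

namespace InO

variable {ρ : WittRep W} (hO : ρ.InO)
include hO

theorem hasFiniteSupport_E_summand (k : ℤ) (v : W) :
    Function.HasFiniteSupport fun i : ℕ => ((k : ℂ) ^ i / i !) • ρ.d (i - 1) v := by
  obtain ⟨N, hN⟩ := hO v
  refine (Set.finite_Iio (N + 1)).subset fun i hi => ?_
  by_contra hiN
  exact hi (by simp [hN ((i : ℤ) - 1) (by simp at hiN; omega)])

noncomputable def E (k : ℤ) : W →ₗ[ℂ] W where
  toFun := ρ.E k
  map_add' u v := by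
    simp only [WittRep.E, map_add, smul_add]
    exact finsum_add_distrib (hO.hasFiniteSupport_E_summand k u)
      (hO.hasFiniteSupport_E_summand k v)
  map_smul' c v := by
    simp only [WittRep.E, map_smul, smul_comm _ c, RingHom.id_apply, smul_finsum]

@[simp] theorem E_apply (k : ℤ) (v : W) : hO.E k v = ρ.E k v := rfl

theorem E_E_eq_sum {N : ℕ} {v : W} (hv : ∀ i : ℤ, N ≤ i → ρ.d i v = 0) (m n : ℤ) :
    ρ.E m (ρ.E n v) = ∑ i ∈ range (N + 2), ∑ j ∈ range (N + 2),
      ((m : ℂ) ^ i / i ! * ((n : ℂ) ^ j / j !)) • ρ.d (i - 1) (ρ.d (j - 1) v) := by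
  rw [ρ.E_eq_sum_range (N := N + 2) (fun j hj => hv _ (by omega)) n, ← hO.E_apply, map_sum,
    sum_comm]
  refine sum_congr rfl fun j _ => ?_
  rw [map_smul, hO.E_apply,
    ρ.E_eq_sum_range (N := N + 2) (fun i hi => ρ.d_d_eq_zero hv (by omega) (by omega)), smul_sum]
  simp only [smul_smul, mul_comm]

theorem E_comm_E (m n : ℤ) (v : W) :
    ρ.E m (ρ.E n v) - ρ.E n (ρ.E m v) = ((n - m : ℤ) : ℂ) • ρ.E (m + n) v := by
  obtain ⟨N, hv⟩ := hO v
  have hterm (i j : ℕ) :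
      ((m : ℂ) ^ i / i ! * ((n : ℂ) ^ j / j !)) • ρ.d (i - 1) (ρ.d (j - 1) v) -
        ((n : ℂ) ^ j / j ! * ((m : ℂ) ^ i / i !)) • ρ.d (j - 1) (ρ.d (i - 1) v) =
      (((j : ℂ) - i) * ((m : ℂ) ^ i / i ! * ((n : ℂ) ^ j / j !))) • ρ.d ((i + j : ℕ) - 2) v := by
    rw [ρ.d_comm_apply (by omega) (by omega), mul_comm ((n : ℂ) ^ j / _), ← smul_sub,
      add_sub_cancel_left, smul_smul]
    congr 1
    · push_cast; ring
    · congr 2; push_cast; ring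
  have hfiber (s : ℕ) :
      ∑ p ∈ antidiagonal s,
        (((p.2 : ℂ) - p.1) * ((m : ℂ) ^ p.1 / p.1 ! * ((n : ℂ) ^ p.2 / p.2 !))) •
          ρ.d ((p.1 + p.2 : ℕ) - 2) v =
      (∑ p ∈ antidiagonal s,
        ((p.2 : ℂ) - p.1) * ((m : ℂ) ^ p.1 / p.1 ! * ((n : ℂ) ^ p.2 / p.2 !))) •
          ρ.d (s - 2) v := by
    rw [sum_smul]
    exact sum_congr rfl fun p hp => by rw [HasAntidiagonal.mem_antidiagonal.1 hp]
  have hswap := hO.E_E_eq_sum hv n m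
  rw [sum_comm] at hswap
  rw [hO.E_E_eq_sum hv, hswap, ← sum_sub_distrib]
  simp only [← sum_sub_distrib, hterm]
  rw [sum_range_sum_range_eq_sum_antidiagonal _ fun i j hij => by rw [hv _ (by omega), smul_zero]]
  simp only [hfiber]
  rw [sum_range_succ', ρ.E_eq_sum_range (N := N + 1) (fun i hi => hv _ (by omega)), smul_sum]
  simp only [Complex.sum_antidiagonal_succ_sub_mul_pow_div_factorial, smul_smul]
  rw [Nat.antidiagonal_zero, sum_singleton, sub_self, zero_mul, zero_smul, add_zero]
  refine sum_congr rfl fun s _ => ?_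
  rw [show ((s + 1 : ℕ) : ℤ) - 2 = s - 1 by push_cast; ring]
  push_cast
  rfl

theorem E_comm_d_neg_one (k : ℤ) (v : W) :
    ρ.E k (ρ.d (-1) v) - ρ.d (-1) (ρ.E k v) = (-k : ℂ) • ρ.E k v := by
  simpa [E_zero_apply] using hO.E_comm_E k 0 v

noncomputable def coeff (lam a b : ℂ) (k j : ℤ) : W →ₗ[ℂ] W :=
  lam ^ k • hO.E k - ρ.d (-1) + (a + k * b + j) • LinearMap.id

theorem coeff_apply (lam a b : ℂ) (k j : ℤ) (v : W) :
    hO.coeff lam a b k j v = ρ.coeff lam a b k j v := rfl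

theorem coeff_comm {lam : ℂ} (hlam : lam ≠ 0) (a b : ℂ) (m n j : ℤ) (v : W) :
    ρ.coeff lam a b m (n + j) (ρ.coeff lam a b n j v) -
        ρ.coeff lam a b n (m + j) (ρ.coeff lam a b m j v) =
      ((n - m : ℤ) : ℂ) • ρ.coeff lam a b (m + n) j v := by
  simp only [← hO.coeff_apply, InO.coeff, LinearMap.add_apply, LinearMap.sub_apply,
    LinearMap.smul_apply, LinearMap.id_apply, map_add, map_sub, map_smul, InO.E_apply]
  have hmn := hO.E_comm_E m n v
  have hm := hO.E_comm_d_neg_one m v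
  have hn := hO.E_comm_d_neg_one n v
  rw [zpow_add₀ hlam]
  push_cast at hmn ⊢
  linear_combination (norm := module) (lam ^ m * lam ^ n) • hmn - lam ^ m • hm + lam ^ n • hn

/-- `L(W, λ, a, b)` as a representation of the Virasoro algebra, with central charge `0`. -/
noncomputable def L {lam : ℂ} (hlam : lam ≠ 0) (a b : ℂ) : VirasoroRep (ℤ →₀ W) where
  d k := Finsupp.lsum ℂ fun j => Finsupp.lsingle (k + j) ∘ₗ hO.coeff lam a b k j
  z := 0
  comm m n := by
    refine Finsupp.lhom_ext fun j v => ?_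
    simp only [LinearMap.sub_apply, LinearMap.comp_apply, Finsupp.lsum_single,
      Finsupp.lsingle_apply, LinearMap.smul_apply, smul_zero, add_zero, hO.coeff_apply]
    rw [show m + (n + j) = m + n + j by ring, show n + (m + j) = m + n + j by ring,
      ← Finsupp.single_sub, Finsupp.smul_single, hO.coeff_comm hlam]
  comm_z m := by simp

theorem L_d {lam : ℂ} (hlam : lam ≠ 0) (a b : ℂ) (k : ℤ) :
    ⇑((hO.L hlam a b).d k) = ρ.Lact lam a b k := rfl

end InO

section

variable (ρ : WittRep W)

noncomputable def dNegPow (w₀ : W) : ℕ → W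
  | 0 => w₀
  | n + 1 => ρ.d (-1) (dNegPow w₀ n)

theorem dNegPow_zero (w₀ : W) : ρ.dNegPow w₀ 0 = w₀ := rfl

theorem dNegPow_succ (w₀ : W) (n : ℕ) : ρ.dNegPow w₀ (n + 1) = ρ.d (-1) (ρ.dNegPow w₀ n) := rfl

noncomputable def dNegPowSpan (w₀ : W) (n : ℕ) : Submodule ℂ W :=
  span ℂ (ρ.dNegPow w₀ '' Set.Iio n)

/-- `ρ.dOneOrbit lam a b w₀ i m` is the coefficient of `t^m` in `d_1^i · (w₀ ⊗ t^{m-i})`. -/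
noncomputable def dOneOrbit (lam a b : ℂ) (w₀ : W) : ℕ → ℤ → W
  | 0, _ => w₀
  | i + 1, m => ρ.coeff lam a b 1 (m - 1) (dOneOrbit lam a b w₀ i (m - 1))

theorem Lact_one_iterate_single (lam a b : ℂ) (w₀ : W) (i : ℕ) (p : ℤ) :
    (ρ.Lact lam a b 1)^[i] (Finsupp.single p w₀) =
      Finsupp.single (p + i) (ρ.dOneOrbit lam a b w₀ i (p + i)) := by
  induction i with
  | zero => simp [dOneOrbit]
  | succ i ih =>
    rw [Function.iterate_succ_apply', ih, Lact_single, dOneOrbit,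
      show p + ((i + 1 : ℕ) : ℤ) - 1 = p + i by push_cast; ring,
      show (1 : ℤ) + (p + i) = p + (i + 1 : ℕ) by push_cast; ring]

noncomputable def Lpar (a b' : ℂ) (w₀ : W) (ε : ℤ) : Submodule ℂ (ℤ →₀ W) :=
  span ℂ {g | ∃ (i : ℕ) (j : ℤ),
    g = (ρ.Lact (-1) a (b' + 1) 1)^[i] (Finsupp.single (2 * j + ε) w₀)}

theorem Lzero_eq_Lpar (a b' : ℂ) (w₀ : W) : ρ.Lzero a b' w₀ = ρ.Lpar a b' w₀ 0 := by
  simp only [Lzero, Lpar, add_zero]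

theorem Lone_eq_Lpar (a b' : ℂ) (w₀ : W) : ρ.Lone a b' w₀ = ρ.Lpar a b' w₀ 1 := rfl

theorem Lpar_le_gradedSub (a b' : ℂ) (w₀ : W) (ε : ℤ) :
    ρ.Lpar a b' w₀ ε ≤ gradedSub fun m =>
      span ℂ ((fun i => ρ.dOneOrbit (-1) a (b' + 1) w₀ i m) '' {i | Even (m - i - ε)}) := by
  refine span_le.2 ?_
  rintro _ ⟨i, j, rfl⟩ m
  rw [Lact_one_iterate_single, Finsupp.single_apply]
  split_ifs with h
  · subst h
    exact subset_span ⟨i, ⟨j, by ring⟩, rfl⟩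
  · exact zero_mem _

end

variable {ρ : WittRep W} {w₀ : W}

theorem dNegPow_mem_dNegPowSpan {j n : ℕ} (h : j < n) : ρ.dNegPow w₀ j ∈ ρ.dNegPowSpan w₀ n :=
  subset_span ⟨j, h, rfl⟩

theorem dNegPowSpan_mono {m n : ℕ} (h : m ≤ n) : ρ.dNegPowSpan w₀ m ≤ ρ.dNegPowSpan w₀ n :=
  span_mono (Set.image_mono (Set.Iio_subset_Iio h))

theorem map_mem_dNegPowSpan {f : W →ₗ[ℂ] W} {m n : ℕ}
    (hf : ∀ j < n, f (ρ.dNegPow w₀ j) ∈ ρ.dNegPowSpan w₀ m) {v : W}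
    (hv : v ∈ ρ.dNegPowSpan w₀ n) : f v ∈ ρ.dNegPowSpan w₀ m := by
  have hle : ρ.dNegPowSpan w₀ n ≤ (ρ.dNegPowSpan w₀ m).comap f :=
    span_le.2 (by rintro _ ⟨j, hj, rfl⟩; exact hf j hj)
  exact hle hv

theorem d_neg_one_mem_dNegPowSpan {n : ℕ} {v : W} (hv : v ∈ ρ.dNegPowSpan w₀ n) :
    ρ.d (-1) v ∈ ρ.dNegPowSpan w₀ (n + 1) :=
  map_mem_dNegPowSpan (f := ρ.d (-1))
    (fun j hj => by rw [← dNegPow_succ]; exact dNegPow_mem_dNegPowSpan (by omega)) hv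

namespace IsHW

variable {b' : ℂ} (hhw : ρ.IsHW w₀ b')
include hhw

theorem d_zero_dNegPow (n : ℕ) : ρ.d 0 (ρ.dNegPow w₀ n) = (b' - n) • ρ.dNegPow w₀ n := by
  induction n with
  | zero => simpa [dNegPow_zero] using hhw.2.1
  | succ n ih =>
    rw [dNegPow_succ, ρ.d_comm_apply (by norm_num) (by norm_num), ih, map_smul]
    push_cast
    module

theorem d_one_dNegPow_succ (n : ℕ) :
    ρ.d 1 (ρ.dNegPow w₀ (n + 1)) = (-((n + 1) * (2 * b' - n)) : ℂ) • ρ.dNegPow w₀ n := by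
  induction n with
  | zero =>
    rw [dNegPow_succ, ρ.d_comm_apply (by norm_num) (by norm_num), show (1 : ℤ) + -1 = 0 by rfl,
      dNegPow_zero, hhw.2.2 1 le_rfl, map_zero, zero_add, hhw.2.1, smul_smul]
    norm_num
  | succ n ih =>
    rw [dNegPow_succ, ρ.d_comm_apply (by norm_num) (by norm_num), show (1 : ℤ) + -1 = 0 by rfl,
      ih, map_smul, ← dNegPow_succ, hhw.d_zero_dNegPow]
    push_cast
    module

theorem d_two_dNegPow_add_two (n : ℕ) :
    ρ.d 2 (ρ.dNegPow w₀ (n + 2)) = ((n + 2) * (n + 1) * (3 * b' - n) : ℂ) • ρ.dNegPow w₀ n := by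
  have hd2 (m : ℕ) : ρ.d 2 (ρ.dNegPow w₀ (m + 1)) =
      ρ.d (-1) (ρ.d 2 (ρ.dNegPow w₀ m)) + (-3 : ℂ) • ρ.d 1 (ρ.dNegPow w₀ m) := by
    rw [dNegPow_succ, ρ.d_comm_apply (by norm_num) (by norm_num)]
    norm_num
  induction n with
  | zero =>
    rw [hd2, hd2 0, dNegPow_zero, hhw.2.2 2 (by norm_num), hhw.2.2 1 le_rfl,
      hhw.d_one_dNegPow_succ 0]
    simp only [map_zero, smul_zero, add_zero, zero_add, smul_smul, dNegPow_zero]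
    congr 1
    push_cast
    ring
  | succ n ih =>
    rw [hd2, ih, map_smul, ← dNegPow_succ, hhw.d_one_dNegPow_succ]
    push_cast
    module

theorem dNegPow_ne_zero (hb' : b' ≠ 0) (n : ℕ) : ρ.dNegPow w₀ n ≠ 0 := by
  suffices h : ∀ n, ρ.dNegPow w₀ n ≠ 0 ∧ ρ.dNegPow w₀ (n + 1) ≠ 0 from (h n).1
  intro n
  induction n with
  | zero =>
    refine ⟨hhw.1, fun h => ?_⟩
    have h1 := hhw.d_one_dNegPow_succ 0
    rw [h, map_zero, dNegPow_zero, eq_comm, smul_eq_zero, or_iff_left hhw.1] at h1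
    apply hb'
    push_cast at h1
    linear_combination -h1 / 2
  | succ n ih =>
    refine ⟨ih.2, fun h => ?_⟩
    -- `d_1` and `d_2` both kill `d_{-1}^{n+2} w₀`, forcing `2b' = n + 1` and `3b' = n`.
    have h1 := hhw.d_one_dNegPow_succ (n + 1)
    have h2 := hhw.d_two_dNegPow_add_two n
    rw [h, map_zero, eq_comm, smul_eq_zero, or_iff_left ih.2] at h1
    rw [h, map_zero, eq_comm, smul_eq_zero, or_iff_left ih.1] at h2
    have h3 : (((n + 2) * (n + 1) * (n + 3) : ℕ) : ℂ) = 0 := by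
      push_cast at h1 h2 ⊢
      linear_combination 2 * h2 + 3 * (n + 1) * h1
    exact absurd (Nat.cast_eq_zero.1 h3) (by positivity)

theorem linearIndependent_dNegPow (hb' : b' ≠ 0) : LinearIndependent ℂ (ρ.dNegPow w₀) :=
  Module.End.eigenvectors_linearIndependent' (ρ.d 0) (fun n : ℕ => b' - n)
    (fun m n h => by simpa using h) _
    fun n => ⟨Module.End.mem_eigenspace_iff.2 (hhw.d_zero_dNegPow n), hhw.dNegPow_ne_zero hb' n⟩

theorem d_dNegPow_mem (n : ℕ) {i : ℤ} (hi : 0 ≤ i) :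
    ρ.d i (ρ.dNegPow w₀ n) ∈ ρ.dNegPowSpan w₀ (n + 1) := by
  induction n generalizing i with
  | zero =>
    rcases hi.eq_or_lt with rfl | hi
    · rw [dNegPow_zero, hhw.2.1]
      exact smul_mem _ _ (dNegPow_mem_dNegPowSpan zero_lt_one)
    · rw [dNegPow_zero, hhw.2.2 i hi]
      exact zero_mem _
  | succ n ih =>
    rw [dNegPow_succ, ρ.d_comm_apply (by omega) le_rfl]
    refine add_mem (d_neg_one_mem_dNegPowSpan (ih hi)) (smul_mem _ _ ?_)
    rcases hi.eq_or_lt with rfl | hi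
    · exact dNegPow_mem_dNegPowSpan (j := n + 1) (by omega)
    · exact dNegPowSpan_mono (by omega) (ih (i := i + -1) (by omega))

theorem span_range_dNegPow (hgen : ρ.Generates w₀) :
    span ℂ (Set.range (ρ.dNegPow w₀)) = ⊤ := by
  refine hgen _ (fun i hi u hu => ?_) (subset_span ⟨0, rfl⟩)
  have hle : span ℂ (Set.range (ρ.dNegPow w₀)) ≤
      (span ℂ (Set.range (ρ.dNegPow w₀))).comap (ρ.d i) := by
    refine span_le.2 ?_
    rintro _ ⟨n, rfl⟩
    rcases hi.eq_or_lt with rfl | hi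
    · exact subset_span ⟨n + 1, rfl⟩
    · exact span_mono (Set.image_subset_range _ _) (hhw.d_dNegPow_mem n (by omega))
  exact hle hu

theorem E_apply_eq (k : ℤ) : ρ.E k w₀ = ρ.d (-1) w₀ + (k * b') • w₀ := by
  rw [ρ.E_eq_sum_range (N := 2) (fun i hi => hhw.2.2 _ (by omega)), sum_range_succ,
    sum_range_one]
  simp [hhw.2.1, smul_smul]

theorem Lact_single_of_even (a : ℂ) {k : ℤ} (hk : Even k) (p : ℤ) :
    ρ.Lact (-1) a (b' + 1) k (Finsupp.single p w₀) =
      (a + 2 * k * b' + k + p) • Finsupp.single (k + p) w₀ := by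
  rw [Lact_single, coeff, hhw.E_apply_eq, hk.neg_one_zpow, Finsupp.smul_single]
  congr 1
  module

theorem Lact_single_of_odd (a : ℂ) {k : ℤ} (hk : Odd k) (p : ℤ) :
    ρ.Lact (-1) a (b' + 1) k (Finsupp.single p w₀) =
      ρ.Lact (-1) a (b' + 1) 1 (Finsupp.single (k + p - 1) w₀) := by
  rw [Lact_single, Lact_single, coeff, coeff, hhw.E_apply_eq, hhw.E_apply_eq, hk.neg_one_zpow,
    zpow_one, show (1 : ℤ) + (k + p - 1) = k + p by ring]
  congr 1
  push_cast
  module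

variable (hO : ρ.InO)
include hO

theorem E_dNegPow_sub_mem (k : ℤ) (n : ℕ) :
    ρ.E k (ρ.dNegPow w₀ n) - ρ.dNegPow w₀ (n + 1) ∈ ρ.dNegPowSpan w₀ (n + 1) := by
  obtain ⟨N, hN⟩ := hO (ρ.dNegPow w₀ n)
  rw [ρ.E_eq_sum_range (N := N + 2) (fun i hi => hN _ (by omega)), sum_range_succ']
  simp only [pow_zero, Nat.factorial_zero, Nat.cast_one, div_one, one_smul, CharP.cast_eq_zero,
    zero_sub, dNegPow_succ, add_sub_cancel_right]
  exact sum_mem fun i _ => smul_mem _ _ (hhw.d_dNegPow_mem n (by omega))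

theorem coeff_dNegPow_sub_mem (lam a b : ℂ) (k j : ℤ) (n : ℕ) :
    ρ.coeff lam a b k j (ρ.dNegPow w₀ n) - (lam ^ k - 1) • ρ.dNegPow w₀ (n + 1) ∈
      ρ.dNegPowSpan w₀ (n + 1) := by
  have h : ρ.coeff lam a b k j (ρ.dNegPow w₀ n) - (lam ^ k - 1) • ρ.dNegPow w₀ (n + 1) =
      lam ^ k • (ρ.E k (ρ.dNegPow w₀ n) - ρ.dNegPow w₀ (n + 1)) +
        (a + k * b + j) • ρ.dNegPow w₀ n := by
    rw [coeff, dNegPow_succ]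
    module
  rw [h]
  exact add_mem (smul_mem _ _ (hhw.E_dNegPow_sub_mem hO k n))
    (smul_mem _ _ (dNegPow_mem_dNegPowSpan n.lt_succ_self))

theorem coeff_mem_dNegPowSpan (lam a b : ℂ) (k j : ℤ) {n : ℕ} {v : W}
    (hv : v ∈ ρ.dNegPowSpan w₀ n) : ρ.coeff lam a b k j v ∈ ρ.dNegPowSpan w₀ (n + 1) := by
  refine map_mem_dNegPowSpan (f := hO.coeff lam a b k j) (fun i hi => ?_) hv
  rw [hO.coeff_apply, ← sub_add_cancel (ρ.coeff lam a b k j _) ((lam ^ k - 1) • _)]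
  exact add_mem (dNegPowSpan_mono (by omega) (hhw.coeff_dNegPow_sub_mem hO lam a b k j i))
    (smul_mem _ _ (dNegPow_mem_dNegPowSpan (by omega)))

theorem dOneOrbit_sub_mem (lam a b : ℂ) (i : ℕ) (m : ℤ) :
    ρ.dOneOrbit lam a b w₀ i m - (lam - 1) ^ i • ρ.dNegPow w₀ i ∈ ρ.dNegPowSpan w₀ i := by
  induction i generalizing m with
  | zero => simp [dOneOrbit, dNegPow_zero]
  | succ i ih =>
    have hsplit :
        ρ.dOneOrbit lam a b w₀ (i + 1) m - (lam - 1) ^ (i + 1) • ρ.dNegPow w₀ (i + 1) =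
          hO.coeff lam a b 1 (m - 1)
              (ρ.dOneOrbit lam a b w₀ i (m - 1) - (lam - 1) ^ i • ρ.dNegPow w₀ i) +
            (lam - 1) ^ i • (ρ.coeff lam a b 1 (m - 1) (ρ.dNegPow w₀ i) -
              (lam ^ (1 : ℤ) - 1) • ρ.dNegPow w₀ (i + 1)) := by
      rw [map_sub, map_smul, hO.coeff_apply, hO.coeff_apply, dOneOrbit, zpow_one, pow_succ]
      module
    rw [hsplit]
    exact add_mem (hhw.coeff_mem_dNegPowSpan hO _ _ _ _ _ (ih (m - 1)))
      (smul_mem _ _ (hhw.coeff_dNegPow_sub_mem hO _ _ _ _ _ i))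

theorem linearIndependent_dOneOrbit {lam : ℂ} (hlam : lam ≠ 1) (a b : ℂ) (m : ℤ) (hb' : b' ≠ 0) :
    LinearIndependent ℂ fun i => ρ.dOneOrbit lam a b w₀ i m :=
  (hhw.linearIndependent_dNegPow hb').of_sub_smul_mem_span_image_Iio
    (fun i => pow_ne_zero i (sub_ne_zero.2 hlam)) (hhw.dOneOrbit_sub_mem hO lam a b · m)

theorem span_range_dOneOrbit {lam : ℂ} (hlam : lam ≠ 1) (a b : ℂ) (m : ℤ)
    (hgen : ρ.Generates w₀) : span ℂ (Set.range fun i => ρ.dOneOrbit lam a b w₀ i m) = ⊤ := by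
  rw [span_range_eq_of_sub_smul_mem (fun i => pow_ne_zero i (sub_ne_zero.2 hlam))
    (hhw.dOneOrbit_sub_mem hO lam a b · m), hhw.span_range_dNegPow hgen]

theorem actInvariant_Lpar (a : ℂ) (ε : ℤ) :
    ActInvariant (ρ.Lact (-1) a (b' + 1)) (ρ.Lpar a b' w₀ ε) := by
  refine (hO.L (by norm_num) a (b' + 1)).actInvariant_span_iterate_d_one
    (fun j => Finsupp.single (2 * j + ε) w₀) fun k j => ?_
  simp only [InO.L_d]
  rcases k.even_or_odd' with ⟨t, rfl | rfl⟩
  · rw [hhw.Lact_single_of_even a (even_two_mul t)]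
    exact smul_mem _ _ (subset_span ⟨0, j + t, by rw [Function.iterate_zero_apply]; ring_nf⟩)
  · rw [hhw.Lact_single_of_odd a (odd_two_mul_add_one t)]
    exact subset_span ⟨1, j + t, by rw [Function.iterate_one]; ring_nf⟩

theorem Lpar_zero_sup_Lpar_one (a : ℂ) (hgen : ρ.Generates w₀) :
    ρ.Lpar a b' w₀ 0 ⊔ ρ.Lpar a b' w₀ 1 = ⊤ := by
  rw [eq_top_iff]
  rintro f -
  induction f using Finsupp.induction_linear with
  | zero => exact zero_mem _
  | add f g hf hg => exact add_mem hf hg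
  | single m v =>
    have hv : Finsupp.single m v ∈ (span ℂ (Set.range fun i =>
        ρ.dOneOrbit (-1) a (b' + 1) w₀ i m)).map (Finsupp.lsingle m) := by
      rw [hhw.span_range_dOneOrbit hO (by norm_num) a (b' + 1) m hgen]
      exact mem_map_of_mem mem_top
    rw [map_span, ← Set.range_comp] at hv
    refine span_le.2 ?_ hv
    rintro _ ⟨i, rfl⟩
    have horbit := ρ.Lact_one_iterate_single (-1) a (b' + 1) w₀ i (m - i)
    rw [sub_add_cancel] at horbit
    obtain ⟨j, hj | hj⟩ := (m - i).even_or_odd'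
    · exact mem_sup_left (subset_span ⟨i, j, by rw [add_zero, ← hj, horbit]; rfl⟩)
    · exact mem_sup_right (subset_span ⟨i, j, by rw [← hj, horbit]; rfl⟩)

theorem Lpar_zero_inf_Lpar_one (a : ℂ) (hb' : b' ≠ 0) :
    ρ.Lpar a b' w₀ 0 ⊓ ρ.Lpar a b' w₀ 1 = ⊥ := by
  refine eq_bot_iff.2 fun f hf => (mem_bot ℂ).2 (Finsupp.ext fun m => ?_)
  have hdisj := (hhw.linearIndependent_dOneOrbit hO (lam := -1) (by norm_num) a (b' + 1) m hb')
    |>.disjoint_span_image (s := {i | Even (m - i - 0)}) (t := {i | Even (m - i - 1)})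
      (Set.disjoint_left.2 fun i h0 h1 => Int.even_sub_one.1 h1 (by simpa using h0))
  exact disjoint_def.1 hdisj _ (ρ.Lpar_le_gradedSub a b' w₀ 0 hf.1 m)
    (ρ.Lpar_le_gradedSub a b' w₀ 1 hf.2 m)

end IsHW

end WittRep

theorem stmt9 {W : Type*} [AddCommGroup W] [Module ℂ W] (ρ : WittRep W)
    (hO : ρ.InO) (a b' : ℂ) (hb' : b' ≠ 0)
    (w₀ : W) (hhw : ρ.IsHW w₀ b') (hgen : ρ.Generates w₀) :
    (∀ k : ℤ, ∀ u ∈ ρ.Lzero a b' w₀, ρ.Lact (-1) a (b' + 1) k u ∈ ρ.Lzero a b' w₀) ∧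
    (∀ k : ℤ, ∀ u ∈ ρ.Lone a b' w₀, ρ.Lact (-1) a (b' + 1) k u ∈ ρ.Lone a b' w₀) ∧
    ρ.Lzero a b' w₀ ⊔ ρ.Lone a b' w₀ = ⊤ ∧
    ρ.Lzero a b' w₀ ⊓ ρ.Lone a b' w₀ = ⊥ := by
  rw [ρ.Lzero_eq_Lpar, ρ.Lone_eq_Lpar]
  exact ⟨hhw.actInvariant_Lpar hO a 0, hhw.actInvariant_Lpar hO a 1,
    hhw.Lpar_zero_sup_Lpar_one hO a hgen, hhw.Lpar_zero_inf_Lpar_one hO a hb'⟩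
end
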